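/- arXiv:math/9711225 — 8 statements merged into one kernel-verified Lean document; each statement's English description precedes it below -/
import Mathlib

section
/- The intersection of any conjugate of A with any conjugate of B in G is conjugate to a subgroup of H: for all s, t ∈ G there exists u ∈ G such that s A s⁻¹ ∩ t B t⁻¹ ⊆ u H u⁻¹. -/
open Monoid

/-- Old Mathlib's `Monoid.IsTorsionFree` (removed upstream), restated with its old meaning:
no element other than `1` has finite order. -/
def Monoid.IsTorsionFree (G : Type*) [Monoid G] : Prop :=
  ∀ g : G, g ≠ 1 → ¬IsOfFinOrder g

section WitnessConstruction

variable (X : Type) [Group X]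

/-- The generator `a` of the free factor `F(a,b,c)` inside `X ∗ F(a,b,c)`. -/
def wA : Coprod X (FreeGroup (Fin 3)) := Coprod.inr (FreeGroup.of 0)
/-- The generator `b` of the free factor `F(a,b,c)` inside `X ∗ F(a,b,c)`. -/
def wB : Coprod X (FreeGroup (Fin 3)) := Coprod.inr (FreeGroup.of 1)
/-- The generator `c` of the free factor `F(a,b,c)` inside `X ∗ F(a,b,c)`. -/
def wC : Coprod X (FreeGroup (Fin 3)) := Coprod.inr (FreeGroup.of 2)

variable {X}

/-- The `r + 3` relators of Miller's witness construction: the three relators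
`(a⁻¹ba)(c⁻¹b⁻¹cbc)⁻¹`, `(a⁻²b⁻¹aba²)(c⁻²b⁻¹cbc²)⁻¹`, `(a⁻³[w,b]a³)(c⁻³bc³)⁻¹`
(with `[w,b] = w⁻¹b⁻¹wb`), together with
`(a^{-(3+j)} gⱼ b a^{3+j})(c^{-(3+j)} b c^{3+j})⁻¹` for `j = 1, …, r`. -/
def witnessRels {r : ℕ} (g : Fin r → X) (w : X) : Set (Coprod X (FreeGroup (Fin 3))) :=
  {(wA X)⁻¹ * wB X * wA X * ((wC X)⁻¹ * (wB X)⁻¹ * wC X * wB X * wC X)⁻¹,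
   (wA X ^ 2)⁻¹ * (wB X)⁻¹ * wA X * wB X * wA X ^ 2 *
     ((wC X ^ 2)⁻¹ * (wB X)⁻¹ * wC X * wB X * wC X ^ 2)⁻¹,
   (wA X ^ 3)⁻¹ * ((Coprod.inl w)⁻¹ * (wB X)⁻¹ * Coprod.inl w * wB X) * wA X ^ 3 *
     ((wC X ^ 3)⁻¹ * wB X * wC X ^ 3)⁻¹} ∪
  Set.range (fun j : Fin r =>
    (wA X ^ (4 + (j : ℕ)))⁻¹ * Coprod.inl (g j) * wB X * wA X ^ (4 + (j : ℕ)) *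
      ((wC X ^ (4 + (j : ℕ)))⁻¹ * wB X * wC X ^ (4 + (j : ℕ)))⁻¹)

/-- Miller's witness group `B(X, w)`: the quotient of `X ∗ F(a,b,c)` by the normal
closure of the `r + 3` relators above. -/
abbrev WitnessGroup {r : ℕ} (g : Fin r → X) (w : X) : Type :=
  Coprod X (FreeGroup (Fin 3)) ⧸ Subgroup.normalClosure (witnessRels g w)

/-- The quotient map `X ∗ F(a,b,c) → B(X, w)`. -/
def witnessMk {r : ℕ} (g : Fin r → X) (w : X) :
    Coprod X (FreeGroup (Fin 3)) →* WitnessGroup g w :=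
  QuotientGroup.mk' _

/-- The image of `c` in the witness group `B(X, w)`. -/
def wcB {r : ℕ} (g : Fin r → X) (w : X) : WitnessGroup g w := witnessMk g w (wC X)

end WitnessConstruction

section Amalgam

/-- A group is finitely presented: it is isomorphic to the quotient of a finitely
generated free group by the normal closure of a finite set of relators. -/
def GroupFinitelyPresented (A : Type) [Group A] : Prop :=
  ∃ (n : ℕ) (rels : Set (FreeGroup (Fin n))), rels.Finite ∧
    Nonempty (A ≃* PresentedGroup rels)

variable {X : Type} [Group X]

/-- The single relator `g c⁻¹` defining the amalgam `G = ⟨A ∗ B ∣ g = c⟩`. -/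
def amalgRel (A : Type) [Group A] {r : ℕ} (g : Fin r → X) (w : X) (gA : A) :
    Set (Coprod A (WitnessGroup g w)) :=
  {Coprod.inl gA * (Coprod.inr (wcB g w))⁻¹}

/-- The amalgam `G = ⟨A ∗ B(X, w) ∣ g = c⟩`: the quotient of the free product `A ∗ B`
by the normal closure of `g c⁻¹`. -/
abbrev AmalgGroup (A : Type) [Group A] {r : ℕ} (g : Fin r → X) (w : X) (gA : A) : Type :=
  Coprod A (WitnessGroup g w) ⧸ Subgroup.normalClosure (amalgRel A g w gA)

/-- The canonical map `A → G`; its range is the canonical image of `A` in `G`. -/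
def ιA (A : Type) [Group A] {r : ℕ} (g : Fin r → X) (w : X) (gA : A) :
    A →* AmalgGroup A g w gA :=
  (QuotientGroup.mk' _).comp Coprod.inl

/-- The canonical map `B → G`; its range is the canonical image of `B` in `G`. -/
def ιB (A : Type) [Group A] {r : ℕ} (g : Fin r → X) (w : X) (gA : A) :
    WitnessGroup g w →* AmalgGroup A g w gA :=
  (QuotientGroup.mk' _).comp Coprod.inr

end Amalgam

/-! ### Auxiliary results on amalgamated products (`Monoid.PushoutI`) -/

section PushoutLemmas

open Monoid.PushoutI Monoid.CoprodI

variable {ι : Type*} {G : ι → Type*} [∀ i, Group (G i)] {H : Type*} [Group H]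
  {φ : ∀ i, H →* G i}

private lemma mem_of_mem_inv_toList {i j : ι} (v : Monoid.CoprodI.NeWord G i j) :
    ∀ l ∈ v.inv.toList, (⟨l.1, l.2⁻¹⟩ : Σ i, G i) ∈ v.toList := by
  induction v with
  | singleton x h =>
    intro l hl
    simp only [Monoid.CoprodI.NeWord.inv, Monoid.CoprodI.NeWord.toList,
      List.mem_singleton] at hl ⊢
    subst hl; simp
  | append v₁ hne v₂ ih₁ ih₂ =>
    intro l hl
    simp only [Monoid.CoprodI.NeWord.inv, Monoid.CoprodI.NeWord.toList,
      List.mem_append] at hl ⊢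
    rcases hl with h | h
    · exact Or.inr (ih₂ _ h)
    · exact Or.inl (ih₁ _ h)

private lemma no_reduced_in_base (hφ : ∀ i, Function.Injective (φ i))
    {i j : ι} (W : Monoid.CoprodI.NeWord G i j)
    (hW : ∀ m ∈ W.toList, Sigma.snd m ∉ (φ m.1).range)
    (h : Monoid.PushoutI.ofCoprodI (φ := φ) W.prod ∈ (Monoid.PushoutI.base φ).range) :
    False := by
  have hred : Monoid.PushoutI.Reduced φ W.toWord := fun m hm => hW m hm
  have h2 := hred.eq_empty_of_mem_range hφ h
  exact Monoid.CoprodI.NeWord.toList_ne_nil W (congrArg Monoid.CoprodI.Word.toList h2)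

private lemma crux (hφ : ∀ i, Function.Injective (φ i))
    {i j k l : ι} (hk : k ≠ i) (hl : l ≠ j) (v : Monoid.CoprodI.NeWord G k l)
    (hv : ∀ m ∈ v.toList, Sigma.snd m ∉ (φ m.1).range)
    {a : G i} {b : G j}
    (hab : Monoid.PushoutI.of (φ := φ) i a =
      Monoid.PushoutI.ofCoprodI v.prod * Monoid.PushoutI.of j b *
        (Monoid.PushoutI.ofCoprodI v.prod)⁻¹) :
    b ∈ (φ j).range := by
  by_contra hb
  have hb1 : b ≠ 1 := fun h => hb (h ▸ one_mem _)
  set W1 : Monoid.CoprodI.NeWord G k k :=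
    (v.append hl (Monoid.CoprodI.NeWord.singleton b hb1)).append (Ne.symm hl) v.inv with hW1
  have hW1list : ∀ m ∈ W1.toList, Sigma.snd m ∉ (φ m.1).range := by
    intro m hm
    simp only [hW1, Monoid.CoprodI.NeWord.toList, List.mem_append,
      List.mem_singleton] at hm
    rcases hm with (hm | rfl) | hm
    · exact hv m hm
    · exact hb
    · have h2 := mem_of_mem_inv_toList v m hm
      intro hr
      exact hv _ h2 (inv_mem hr)
  have hW1prod : Monoid.PushoutI.ofCoprodI (φ := φ) W1.prod =
      Monoid.PushoutI.ofCoprodI v.prod * Monoid.PushoutI.of j b *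
        (Monoid.PushoutI.ofCoprodI v.prod)⁻¹ := by
    simp [hW1, Monoid.CoprodI.NeWord.append_prod, Monoid.CoprodI.NeWord.prod_singleton,
      Monoid.CoprodI.NeWord.inv_prod, map_mul, map_inv, Monoid.PushoutI.ofCoprodI_of, mul_assoc]
  by_cases ha : a ∈ (φ i).range
  · obtain ⟨h', hh'⟩ := ha
    refine no_reduced_in_base hφ W1 hW1list ?_
    rw [hW1prod, ← hab, ← hh', Monoid.PushoutI.of_apply_eq_base]
    exact ⟨h', rfl⟩
  · have ha1 : a ≠ 1 := fun h => ha (h ▸ one_mem _)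
    refine no_reduced_in_base hφ
      ((Monoid.CoprodI.NeWord.singleton a⁻¹ (inv_ne_one.2 ha1)).append (Ne.symm hk) W1) ?_ ?_
    · intro m hm
      rw [show ((Monoid.CoprodI.NeWord.singleton a⁻¹ (inv_ne_one.2 ha1)).append
          (Ne.symm hk) W1).toList = [⟨i, a⁻¹⟩] ++ W1.toList from rfl,
        List.mem_append, List.mem_singleton] at hm
      rcases hm with rfl | hm
      · exact fun hr => ha ((inv_inv a) ▸ inv_mem hr)
      · exact hW1list m hm
    · have : Monoid.PushoutI.ofCoprodI (φ := φ)
          (((Monoid.CoprodI.NeWord.singleton a⁻¹ (inv_ne_one.2 ha1)).append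
            (Ne.symm hk) W1)).prod = 1 := by
        rw [Monoid.CoprodI.NeWord.append_prod, map_mul, Monoid.CoprodI.NeWord.prod_singleton,
          Monoid.PushoutI.ofCoprodI_of, hW1prod, ← hab, map_inv, inv_mul_cancel]
      rw [this]; exact one_mem _

private lemma strip_left (hφ : ∀ i, Function.Injective (φ i)) (i : ι)
    (x : Monoid.PushoutI φ) :
    ∃ (a : G i) (w : Monoid.CoprodI.Word G),
      x = Monoid.PushoutI.of i a * Monoid.PushoutI.ofCoprodI w.prod ∧
      Monoid.PushoutI.Reduced φ w ∧ w.fstIdx ≠ some i := by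
  classical
  obtain ⟨d⟩ := Monoid.PushoutI.NormalWord.transversal_nonempty φ hφ
  set n : Monoid.PushoutI.NormalWord d := x • Monoid.PushoutI.NormalWord.empty with hn
  have hx : x = Monoid.PushoutI.base φ n.head *
      Monoid.PushoutI.ofCoprodI n.toWord.prod := by
    have h1 : n.prod = x := by
      rw [hn, Monoid.PushoutI.NormalWord.prod_smul, Monoid.PushoutI.NormalWord.prod_empty,
        mul_one]
    rw [← h1]; rfl
  have hred : Monoid.PushoutI.Reduced φ n.toWord := by
    intro m hm
    rintro ⟨h', hh'⟩
    have hset := n.normalized m.1 m.2 (by exact hm)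
    have hne := n.toWord.ne_one m hm
    obtain ⟨u, -, hu⟩ := (d.compl m.1).existsUnique m.2
    have e1 := hu ⟨⟨m.2, ⟨h', hh'⟩⟩, ⟨1, d.one_mem m.1⟩⟩ (by simp)
    have e2 := hu ⟨⟨1, one_mem _⟩, ⟨m.2, hset⟩⟩ (by simp)
    have e3 := congrArg (fun p => (p.2 : G m.1)) (e1.trans e2.symm)
    exact hne e3.symm
  by_cases hfi : n.toWord.fstIdx = some i
  · rcases hL : n.toWord.toList with - | ⟨⟨k, g0⟩, ls⟩
    · rw [Monoid.CoprodI.Word.fstIdx, hL] at hfi; simp at hfi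
    · have hki : k = i := by
        rw [Monoid.CoprodI.Word.fstIdx, hL] at hfi; simpa using hfi
      clear hfi
      subst hki
      have hne1 : ∀ m ∈ ls, Sigma.snd m ≠ 1 := fun m hm =>
        n.toWord.ne_one m (by rw [hL]; exact List.mem_cons_of_mem _ hm)
      have hch0 := n.toWord.chain_ne
      rw [hL] at hch0
      refine ⟨φ k n.head * g0, ⟨ls, hne1, hch0.tail⟩, ?_, ?_, ?_⟩
      · rw [hx, map_mul, Monoid.PushoutI.of_apply_eq_base]
        have hp : n.toWord.prod = Monoid.CoprodI.of g0 *
            Monoid.CoprodI.Word.prod ⟨ls, hne1, hch0.tail⟩ := by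
          simp [Monoid.CoprodI.Word.prod, hL]
        rw [hp, map_mul, Monoid.PushoutI.ofCoprodI_of, mul_assoc]
      · exact fun m hm => hred m (by rw [hL]; exact List.mem_cons_of_mem _ hm)
      · rw [Monoid.CoprodI.Word.fstIdx_ne_iff]
        intro m hm
        have := (List.isChain_cons.1 hch0).1 m hm
        exact fun h => this (by simp [← h])
  · exact ⟨φ i n.head, n.toWord, by rw [hx, Monoid.PushoutI.of_apply_eq_base], hred, hfi⟩

private lemma strip_right (i j : ι) (w : Monoid.CoprodI.Word G)
    (hred : Monoid.PushoutI.Reduced φ w) (hfi : w.fstIdx ≠ some i) :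
    ∃ (b : G j) (w' : Monoid.CoprodI.Word G),
      Monoid.PushoutI.ofCoprodI (φ := φ) w.prod
        = Monoid.PushoutI.ofCoprodI w'.prod * Monoid.PushoutI.of j b ∧
      Monoid.PushoutI.Reduced φ w' ∧ w'.fstIdx ≠ some i ∧
      w'.toList.getLast?.map Sigma.fst ≠ some j := by
  by_cases hlj : w.toList.getLast?.map Sigma.fst = some j
  · obtain (hnil | ⟨L, m, hL⟩) := w.toList.eq_nil_or_concat
    · rw [hnil] at hlj; simp at hlj
    · rw [List.concat_eq_append] at hL
      obtain ⟨jj, g0⟩ := m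
      have hjj : j = jj := by
        rw [hL] at hlj
        exact (by simpa using hlj : jj = j).symm
      subst hjj
      have hne1 : ∀ m ∈ L, Sigma.snd m ≠ 1 := fun m hm =>
        w.ne_one m (by rw [hL]; exact List.mem_append_left _ hm)
      have hch0 := w.chain_ne
      rw [hL] at hch0
      have hch := List.isChain_append.1 hch0
      refine ⟨g0, ⟨L, hne1, hch.1⟩, ?_, ?_, ?_, ?_⟩
      · have hp : w.prod = Monoid.CoprodI.Word.prod ⟨L, hne1, hch.1⟩ *
            Monoid.CoprodI.of g0 := by
          simp [Monoid.CoprodI.Word.prod, hL]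
        rw [hp, map_mul, Monoid.PushoutI.ofCoprodI_of]
      · exact fun m hm => hred m (by rw [hL]; exact List.mem_append_left _ hm)
      · intro hLi
        apply hfi
        rw [Monoid.CoprodI.Word.fstIdx, hL] at *
        rcases L with - | ⟨a0, L'⟩
        · simp [Monoid.CoprodI.Word.fstIdx] at hLi
        · simpa [Monoid.CoprodI.Word.fstIdx] using hLi
      · intro hlast
        obtain ⟨m', hm', hm'j⟩ : ∃ m', L.getLast? = some m' ∧ Sigma.fst m' = j := by
          rcases h' : L.getLast? with - | m'
          · rw [h'] at hlast; simp at hlast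
          · rw [h'] at hlast; exact ⟨m', rfl, by simpa using hlast⟩
        exact hch.2.2 m' hm' ⟨j, g0⟩ (by simp) (by simpa using hm'j)
  · exact ⟨1, w, by simp, hred, hfi, hlj⟩

private lemma key (hφ : ∀ i, Function.Injective (φ i)) {i j : ι} (hij : i ≠ j)
    (x : Monoid.PushoutI φ) :
    ∃ u : Monoid.PushoutI φ, ∀ (a : G i) (b : G j),
      Monoid.PushoutI.of i a = x * Monoid.PushoutI.of j b * x⁻¹ →
      ∃ h : H, Monoid.PushoutI.of i a = u * Monoid.PushoutI.base φ h * u⁻¹ := by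
  obtain ⟨a₀, w₀, hx0, hred0, hfi0⟩ := strip_left hφ i x
  obtain ⟨b₀, w, hw, hred, hfi, hlj⟩ := strip_right i j w₀ hred0 hfi0
  have hx : x = Monoid.PushoutI.of i a₀ * Monoid.PushoutI.ofCoprodI w.prod *
      Monoid.PushoutI.of j b₀ := by rw [hx0, hw, mul_assoc]
  set y := Monoid.PushoutI.ofCoprodI (φ := φ) w.prod with hy
  refine ⟨Monoid.PushoutI.of i a₀ * y, ?_⟩
  intro a b hab
  have hmid : y * Monoid.PushoutI.of j (b₀ * b * b₀⁻¹) * y⁻¹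
      = Monoid.PushoutI.of i (a₀⁻¹ * a * a₀) := by
    rw [hx, mul_inv_rev, mul_inv_rev] at hab
    simp only [map_mul, map_inv] at hab ⊢
    rw [hab]; group
  have habu : ∀ h : H, Monoid.PushoutI.base φ h = Monoid.PushoutI.of j (b₀ * b * b₀⁻¹) →
      Monoid.PushoutI.of i a =
        (Monoid.PushoutI.of i a₀ * y) * Monoid.PushoutI.base φ h *
          (Monoid.PushoutI.of i a₀ * y)⁻¹ := by
    intro h h2
    calc Monoid.PushoutI.of i a
        = Monoid.PushoutI.of i a₀ * Monoid.PushoutI.of i (a₀⁻¹ * a * a₀) *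
          (Monoid.PushoutI.of i a₀)⁻¹ := by
          simp only [map_mul, map_inv]; group
      _ = Monoid.PushoutI.of i a₀ * (y * Monoid.PushoutI.of j (b₀ * b * b₀⁻¹) * y⁻¹) *
          (Monoid.PushoutI.of i a₀)⁻¹ := by rw [hmid]
      _ = (Monoid.PushoutI.of i a₀ * y) * Monoid.PushoutI.base φ h *
          (Monoid.PushoutI.of i a₀ * y)⁻¹ := by rw [h2]; group
  by_cases hnil : w.toList = []
  · have hy1 : y = 1 := by
      rw [hy, show w.prod = 1 by simp [Monoid.CoprodI.Word.prod, hnil], map_one]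
    have hmem : Monoid.PushoutI.of i (a₀⁻¹ * a * a₀) ∈ (Monoid.PushoutI.base φ).range := by
      rw [← Monoid.PushoutI.inf_of_range_eq_base_range hφ hij]
      refine ⟨⟨_, rfl⟩, ⟨b₀ * b * b₀⁻¹, ?_⟩⟩
      rw [← hmid, hy1]; simp
    obtain ⟨h, hh⟩ := hmem
    refine ⟨h, habu h ?_⟩
    rw [hh, ← hmid, hy1]; simp
  · have hwne : w ≠ Monoid.CoprodI.Word.empty := fun h =>
      hnil (congrArg Monoid.CoprodI.Word.toList h)
    obtain ⟨k, l, v, hv⟩ := Monoid.CoprodI.NeWord.of_word w hwne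
    have hvl : v.toList = w.toList := congrArg Monoid.CoprodI.Word.toList hv
    have hki : k ≠ i := by
      have h1 : w.fstIdx = some k := by
        rw [Monoid.CoprodI.Word.fstIdx, ← hvl, Monoid.CoprodI.NeWord.toList_head?]; rfl
      exact fun h => hfi (h ▸ h1)
    have hlj' : l ≠ j := by
      have h1 : w.toList.getLast?.map Sigma.fst = some l := by
        rw [← hvl, Monoid.CoprodI.NeWord.toList_getLast?]; rfl
      exact fun h => hlj (h ▸ h1)
    have hvp : Monoid.PushoutI.ofCoprodI (φ := φ) v.prod = y := by
      rw [hy]; congr 1; rw [Monoid.CoprodI.NeWord.prod, hv]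
    have hb' : (b₀ * b * b₀⁻¹) ∈ (φ j).range := by
      refine crux hφ hki hlj' v (fun m hm => hred m (hvl ▸ hm))
        (a := a₀⁻¹ * a * a₀) ?_
      rw [hvp]; exact hmid.symm
    obtain ⟨h, hh⟩ := hb'
    refine ⟨h, habu h ?_⟩
    rw [← Monoid.PushoutI.of_apply_eq_base φ j, hh]

private lemma key2 (hφ : ∀ i, Function.Injective (φ i)) {i j : ι} (hij : i ≠ j)
    (s t : Monoid.PushoutI φ) :
    ∃ u : Monoid.PushoutI φ, ∀ (z : Monoid.PushoutI φ) (a : G i) (b : G j),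
      z = s * Monoid.PushoutI.of i a * s⁻¹ → z = t * Monoid.PushoutI.of j b * t⁻¹ →
      ∃ h : H, z = u * Monoid.PushoutI.base φ h * u⁻¹ := by
  obtain ⟨u₀, hu₀⟩ := key hφ hij (s⁻¹ * t)
  refine ⟨s * u₀, ?_⟩
  intro z a b hza hzb
  have h1 : Monoid.PushoutI.of i a =
      (s⁻¹ * t) * Monoid.PushoutI.of j b * (s⁻¹ * t)⁻¹ := by
    have h2 : Monoid.PushoutI.of i a = s⁻¹ * z * s := by rw [hza]; group
    rw [h2, hzb]; group
  obtain ⟨h, hh⟩ := hu₀ a b h1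
  refine ⟨h, ?_⟩
  have h3 : z = s * Monoid.PushoutI.of i a * s⁻¹ := hza
  rw [h3, hh]; group

end PushoutLemmas

/-! ### Transfer to the concrete amalgam -/

section TransferDefs

variable {X : Type} [Group X] (A : Type) [Group A] {r : ℕ} (g : Fin r → X) (w : X) (gA : A)

private lemma gc_eq : ιA A g w gA gA = ιB A g w gA (wcB g w) := by
  have hrel : (Coprod.inl gA * (Coprod.inr (wcB g w))⁻¹ : Coprod A (WitnessGroup g w)) ∈
      Subgroup.normalClosure (amalgRel A g w gA) :=
    Subgroup.subset_normalClosure rfl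
  have h1 : (QuotientGroup.mk' (Subgroup.normalClosure (amalgRel A g w gA)))
      (Coprod.inl gA * (Coprod.inr (wcB g w))⁻¹) = 1 := by
    rw [QuotientGroup.mk'_apply, QuotientGroup.eq_one_iff]; exact hrel
  rw [map_mul, map_inv, mul_inv_eq_one] at h1
  exact h1

private def SubF : Bool → Subgroup (AmalgGroup A g w gA) :=
  fun b => bif b then (ιA A g w gA).range else (ιB A g w gA).range

private def Hb : Subgroup (AmalgGroup A g w gA) := Subgroup.zpowers (ιA A g w gA gA)

private lemma Hb_le : ∀ b, Hb A g w gA ≤ SubF A g w gA b := by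
  intro b
  cases b
  · exact Subgroup.zpowers_le.2 ⟨wcB g w, (gc_eq A g w gA).symm⟩
  · exact Subgroup.zpowers_le.2 ⟨gA, rfl⟩

private def φF : ∀ b, Hb A g w gA →* SubF A g w gA b :=
  fun b => Subgroup.inclusion (Hb_le A g w gA b)

private def πP : Monoid.PushoutI (φF A g w gA) →* AmalgGroup A g w gA :=
  Monoid.PushoutI.lift (fun b => (SubF A g w gA b).subtype) (Hb A g w gA).subtype
    (fun b => by rw [φF]; exact Subgroup.subtype_comp_inclusion _)

private def τP : Coprod A (WitnessGroup g w) →* Monoid.PushoutI (φF A g w gA) :=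
  Coprod.lift
    ((Monoid.PushoutI.of (φ := φF A g w gA) true).comp (ιA A g w gA).rangeRestrict)
    ((Monoid.PushoutI.of (φ := φF A g w gA) false).comp (ιB A g w gA).rangeRestrict)

private lemma τP_ker :
    Subgroup.normalClosure (amalgRel A g w gA) ≤ (τP A g w gA).ker := by
  apply Subgroup.normalClosure_le_normal
  rintro x hx
  rw [amalgRel, Set.mem_singleton_iff] at hx
  subst hx
  rw [SetLike.mem_coe, MonoidHom.mem_ker, map_mul, map_inv, mul_inv_eq_one]
  show (τP A g w gA) (Coprod.inl gA) = (τP A g w gA) (Coprod.inr (wcB g w))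
  have e1 : (τP A g w gA) (Coprod.inl gA) =
      Monoid.PushoutI.of (φ := φF A g w gA) true ((ιA A g w gA).rangeRestrict gA) := rfl
  have e2 : (τP A g w gA) (Coprod.inr (wcB g w)) =
      Monoid.PushoutI.of (φ := φF A g w gA) false ((ιB A g w gA).rangeRestrict (wcB g w)) := rfl
  rw [e1, e2]
  have e3 : (ιA A g w gA).rangeRestrict gA =
      φF A g w gA true ⟨ιA A g w gA gA, Subgroup.mem_zpowers _⟩ := by
    apply Subtype.ext; rfl
  have e4 : (ιB A g w gA).rangeRestrict (wcB g w) =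
      φF A g w gA false ⟨ιA A g w gA gA, Subgroup.mem_zpowers _⟩ := by
    apply Subtype.ext
    exact (gc_eq A g w gA).symm
  rw [e3, e4, Monoid.PushoutI.of_apply_eq_base, Monoid.PushoutI.of_apply_eq_base]

private def σP : AmalgGroup A g w gA →* Monoid.PushoutI (φF A g w gA) :=
  QuotientGroup.lift _ (τP A g w gA) (τP_ker A g w gA)

private lemma σP_ιA (a : A) : σP A g w gA (ιA A g w gA a) =
    Monoid.PushoutI.of (φ := φF A g w gA) true ((ιA A g w gA).rangeRestrict a) := by
  show σP A g w gA ((QuotientGroup.mk' _) (Coprod.inl a)) = _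
  rw [QuotientGroup.mk'_apply]
  rw [show σP A g w gA = QuotientGroup.lift _ (τP A g w gA) (τP_ker A g w gA) from rfl]
  rw [QuotientGroup.lift_mk']
  rfl

private lemma σP_ιB (bb : WitnessGroup g w) : σP A g w gA (ιB A g w gA bb) =
    Monoid.PushoutI.of (φ := φF A g w gA) false ((ιB A g w gA).rangeRestrict bb) := by
  show σP A g w gA ((QuotientGroup.mk' _) (Coprod.inr bb)) = _
  rw [QuotientGroup.mk'_apply]
  rw [show σP A g w gA = QuotientGroup.lift _ (τP A g w gA) (τP_ker A g w gA) from rfl]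
  rw [QuotientGroup.lift_mk']
  rfl

private lemma πσ : ∀ x : AmalgGroup A g w gA, πP A g w gA (σP A g w gA x) = x := by
  have hcomp : (πP A g w gA).comp ((σP A g w gA).comp
      (QuotientGroup.mk' (Subgroup.normalClosure (amalgRel A g w gA))))
      = QuotientGroup.mk' (Subgroup.normalClosure (amalgRel A g w gA)) := by
    refine Coprod.hom_ext ?_ ?_
    · refine MonoidHom.ext fun a => ?_
      show πP A g w gA (σP A g w gA ((QuotientGroup.mk' _) (Coprod.inl a))) = _
      have : (QuotientGroup.mk' (Subgroup.normalClosure (amalgRel A g w gA)))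
          (Coprod.inl a) = ιA A g w gA a := rfl
      rw [this, σP_ιA, πP]
      exact Monoid.PushoutI.lift_of _ _ _ _
    · refine MonoidHom.ext fun bb => ?_
      show πP A g w gA (σP A g w gA ((QuotientGroup.mk' _) (Coprod.inr bb))) = _
      have : (QuotientGroup.mk' (Subgroup.normalClosure (amalgRel A g w gA)))
          (Coprod.inr bb) = ιB A g w gA bb := rfl
      rw [this, σP_ιB, πP]
      exact Monoid.PushoutI.lift_of _ _ _ _
  intro x
  obtain ⟨y, rfl⟩ := QuotientGroup.mk'_surjective
    (Subgroup.normalClosure (amalgRel A g w gA)) x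
  exact DFunLike.congr_fun hcomp y

end TransferDefs

/-- The intersection of any conjugate of `A` with any conjugate of `B`
in `G` is conjugate to a subgroup of `H` (the cyclic subgroup generated by the common
image of `g` and `c`). -/
theorem amalg_conjugate_of_A_meet_conjugate_of_B_conjugate_into_H
    (X : Type) [Group X] (r : ℕ) (g : Fin r → X) (w : X)
    (hXtf : Monoid.IsTorsionFree X)
    (hgen : Subgroup.closure (Set.range g) = ⊤)
    (hw : w ≠ 1)
    (A : Type) [Group A]
    (hAtf : Monoid.IsTorsionFree A)
    (hAfp : GroupFinitelyPresented A)
    (gA : A) (hgA : ∀ y : A, y ^ 2 ≠ gA)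
    (s t : AmalgGroup A g w gA) :
    ∃ u : AmalgGroup A g w gA,
      Subgroup.map (MulAut.conj s).toMonoidHom (ιA A g w gA).range ⊓
        Subgroup.map (MulAut.conj t).toMonoidHom (ιB A g w gA).range ≤
        Subgroup.map (MulAut.conj u).toMonoidHom (Subgroup.zpowers (ιA A g w gA gA)) := by
  
  classical
  have hφinj : ∀ b, Function.Injective (φF A g w gA b) :=
    fun b => Subgroup.inclusion_injective _
  obtain ⟨u₀, hu₀⟩ := key2 hφinj (show (true : Bool) ≠ false by simp)
    (σP A g w gA s) (σP A g w gA t)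
  refine ⟨πP A g w gA u₀, ?_⟩
  rintro x hx
  rw [Subgroup.mem_inf] at hx
  obtain ⟨hxa, hxb⟩ := hx
  rw [Subgroup.mem_map] at hxa hxb
  obtain ⟨ya, hya, hxa⟩ := hxa
  obtain ⟨a, rfl⟩ := hya
  obtain ⟨yb, hyb, hxb⟩ := hxb
  obtain ⟨bb, rfl⟩ := hyb
  have hxa' : x = s * ιA A g w gA a * s⁻¹ := by
    rw [← hxa]; simp [MulAut.conj_apply, mul_assoc]
  have hxb' : x = t * ιB A g w gA bb * t⁻¹ := by
    rw [← hxb]; simp [MulAut.conj_apply, mul_assoc]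
  have hσa : σP A g w gA x = σP A g w gA s *
      Monoid.PushoutI.of (φ := φF A g w gA) true ((ιA A g w gA).rangeRestrict a) *
      (σP A g w gA s)⁻¹ := by
    rw [hxa', map_mul, map_mul, map_inv, σP_ιA]
  have hσb : σP A g w gA x = σP A g w gA t *
      Monoid.PushoutI.of (φ := φF A g w gA) false ((ιB A g w gA).rangeRestrict bb) *
      (σP A g w gA t)⁻¹ := by
    rw [hxb', map_mul, map_mul, map_inv, σP_ιB]
  obtain ⟨h, hh⟩ := hu₀ (σP A g w gA x) ((ιA A g w gA).rangeRestrict a)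
    ((ιB A g w gA).rangeRestrict bb) hσa hσb
  have hx2 : x = πP A g w gA u₀ * ((h : Hb A g w gA) : AmalgGroup A g w gA) *
      (πP A g w gA u₀)⁻¹ := by
    have h4 := congrArg (πP A g w gA) hh
    rw [πσ] at h4
    rw [h4, map_mul, map_mul, map_inv]
    have h5 : πP A g w gA (Monoid.PushoutI.base (φF A g w gA) h) =
        ((h : Hb A g w gA) : AmalgGroup A g w gA) := by
      rw [πP, Monoid.PushoutI.lift_base]; rfl
    rw [h5]
  rw [Subgroup.mem_map]
  refine ⟨((h : Hb A g w gA) : AmalgGroup A g w gA), h.2, ?_⟩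
  simp only [MulEquiv.toMonoidHom_eq_coe, MonoidHom.coe_coe, MulAut.conj_apply]
  exact hx2.symm
end

section
/- The witness group B = B(X, w) is perfect: its abelianization is the trivial group. -/
open Monoid

private lemma wrel1 {G : Type _} [CommGroup G] (a b c : G)
    (h : a⁻¹ * b * a * (c⁻¹ * b⁻¹ * c * b * c)⁻¹ = 1) : b = c :=
  mul_inv_eq_one.mp (by simpa [mul_comm, mul_left_comm, mul_assoc] using h)

private lemma wrel2 {G : Type _} [CommGroup G] (a b c : G)
    (h : (a ^ 2)⁻¹ * b⁻¹ * a * b * a ^ 2 * ((c ^ 2)⁻¹ * b⁻¹ * c * b * c ^ 2)⁻¹ = 1) : a = c :=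
  mul_inv_eq_one.mp (by simpa [mul_comm, mul_left_comm, mul_assoc, pow_two] using h)

private lemma wrel3 {G : Type _} [CommGroup G] (a b c v : G)
    (h : (a ^ 3)⁻¹ * (v⁻¹ * b⁻¹ * v * b) * a ^ 3 * ((c ^ 3)⁻¹ * b * c ^ 3)⁻¹ = 1) : b = 1 := by
  simpa [mul_comm, mul_left_comm, mul_assoc] using h

private lemma wrel4 {G : Type _} [CommGroup G] (a b c x : G) (n : ℕ)
    (h : (a ^ n)⁻¹ * x * b * a ^ n * ((c ^ n)⁻¹ * b * c ^ n)⁻¹ = 1) (hb : b = 1) : x = 1 := by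
  subst hb
  simpa [mul_comm, mul_left_comm, mul_assoc] using h

/-- The witness group `B = B(X, w)` is perfect: its abelianization
is the trivial group. -/
theorem witness_perfect
    (X : Type) [Group X] (r : ℕ) (g : Fin r → X) (w : X)
    (hgen : Subgroup.closure (Set.range g) = ⊤) :
    Subsingleton (Abelianization (WitnessGroup g w)) := by
  let f : Coprod X (FreeGroup (Fin 3)) →* Abelianization (WitnessGroup g w) :=
    Abelianization.of.comp (witnessMk g w)
  have hker : ∀ x ∈ witnessRels g w, f x = 1 := by
    intro x hx
    have h1 : witnessMk g w x = 1 :=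
      (QuotientGroup.eq_one_iff x).mpr (Subgroup.subset_normalClosure hx)
    show Abelianization.of (witnessMk g w x) = 1
    rw [h1, map_one]
  have h1 := hker _ (Or.inl (Set.mem_insert _ _))
  have h2 := hker _ (Or.inl (Set.mem_insert_of_mem _ (Set.mem_insert _ _)))
  have h3 := hker _ (Or.inl (Set.mem_insert_of_mem _ (Set.mem_insert_of_mem _ rfl)))
  simp only [map_mul, map_inv, map_pow] at h1 h2 h3
  have hBC : f (wB X) = f (wC X) := wrel1 (f (wA X)) _ _ h1
  have hAC : f (wA X) = f (wC X) := wrel2 _ _ _ h2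
  have hB1 : f (wB X) = 1 := wrel3 (f (wA X)) _ (f (wC X)) (f (Coprod.inl w)) h3
  have hC1 : f (wC X) = 1 := hBC ▸ hB1
  have hA1 : f (wA X) = 1 := hAC.trans hC1
  have hgj : ∀ j : Fin r, f (Coprod.inl (g j)) = 1 := by
    intro j
    have h4 := hker _ (Or.inr ⟨j, rfl⟩)
    simp only [map_mul, map_inv, map_pow] at h4
    exact wrel4 (f (wA X)) _ (f (wC X)) _ _ h4 hB1
  have hX : ∀ x : X, f (Coprod.inl x) = 1 := by
    intro x
    have hx : x ∈ Subgroup.closure (Set.range g) := hgen ▸ Subgroup.mem_top x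
    refine Subgroup.closure_induction ?_ ?_ ?_ ?_ hx
    · rintro _ ⟨j, rfl⟩; exact hgj j
    · simp
    · intro a b _ _ ha hb; simp only [map_mul, ha, hb, one_mul]
    · intro a _ ha; simp only [map_inv, ha, inv_one]
  have hall : ∀ y : Coprod X (FreeGroup (Fin 3)), f y = 1 := by
    have hfe : f = 1 := by
      apply Coprod.hom_ext
      · ext x; exact hX x
      · apply FreeGroup.ext_hom
        intro i
        fin_cases i
        · exact hA1
        · exact hB1
        · exact hC1
    intro y; rw [hfe]; rfl
  have key : ∀ z : Abelianization (WitnessGroup g w), z = 1 := by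
    intro z
    obtain ⟨z', rfl⟩ : ∃ z', Abelianization.of z' = z := QuotientGroup.mk_surjective z
    obtain ⟨z'', rfl⟩ := QuotientGroup.mk'_surjective _ z'
    exact hall z''
  exact ⟨fun x y => (key x).trans (key y).symm⟩
end

section
/- The witness group B = B(X, w) is the normal closure of the single element c: the smallest normal subgroup of B containing the image of c is B itself. -/
open Monoid

/-- The witness group `B = B(X, w)` is the normal closure of the
single element `c`: the smallest normal subgroup of `B` containing the image of `c`
is `B` itself. -/
theorem witness_normal_closure_of_c
    (X : Type) [Group X] (r : ℕ) (g : Fin r → X) (w : X)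
    (hgen : Subgroup.closure (Set.range g) = ⊤) :
    Subgroup.normalClosure {wcB g w} = (⊤ : Subgroup (WitnessGroup g w)) := by
  set N := Subgroup.normalClosure {wcB g w} with hN
  set φ : Coprod X (FreeGroup (Fin 3)) →* (WitnessGroup g w ⧸ N) :=
    (QuotientGroup.mk' N).comp (witnessMk g w) with hφ
  have hrel : ∀ ρ ∈ witnessRels g w, φ ρ = 1 := by
    intro ρ hρ
    have h1 : witnessMk g w ρ = 1 := by
      rw [witnessMk, QuotientGroup.mk'_apply, QuotientGroup.eq_one_iff]
      exact Subgroup.subset_normalClosure hρ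
    simp [hφ, h1]
  have hc : φ (wC X) = 1 := by
    have : wcB g w ∈ N := Subgroup.subset_normalClosure rfl
    simpa [hφ, wcB, QuotientGroup.eq_one_iff] using this
  -- b = 1
  have h1 := hrel _ (Set.mem_union_left _ (by left; rfl))
  simp only [map_mul, map_inv, hc] at h1
  have hb : φ (wB X) = 1 := by
    have h1' : (φ (wA X))⁻¹ * φ (wB X) * φ (wA X) = 1 := by
      group at h1 ⊢; simpa using h1
    calc φ (wB X) = φ (wA X) * ((φ (wA X))⁻¹ * φ (wB X) * φ (wA X)) * (φ (wA X))⁻¹ := by group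
    _ = 1 := by rw [h1']; group
  -- a = 1
  have h2 := hrel _ (Set.mem_union_left _ (by right; left; rfl))
  simp only [map_mul, map_inv, map_pow, hb, hc] at h2
  have ha : φ (wA X) = 1 := by group at h2; simpa using h2
  -- g j = 1
  have hg : ∀ j : Fin r, φ (Coprod.inl (g j)) = 1 := by
    intro j
    have h3 := hrel _ (Set.mem_union_right _ ⟨j, rfl⟩)
    simp only [map_mul, map_inv, map_pow, ha, hb, hc] at h3
    simpa using h3
  have hX : ∀ x : X, φ (Coprod.inl x) = 1 := by
    intro x
    have hx : x ∈ Subgroup.closure (Set.range g) := hgen ▸ Subgroup.mem_top x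
    refine Subgroup.closure_induction (fun y hy => ?_) (by simp) ?_ ?_ hx
    · obtain ⟨j, rfl⟩ := hy; exact hg j
    · intro y z _ _ hy hz; simp [map_mul, hy, hz]
    · intro y _ hy; simp [map_inv, hy]
  have hφ1 : φ = 1 := by
    apply Coprod.hom_ext
    · ext x; simpa using hX x
    · apply FreeGroup.ext_hom
      intro i
      fin_cases i
      · simpa [wA] using ha
      · simpa [wB] using hb
      · simpa [wC] using hc
  rw [Subgroup.eq_top_iff']
  intro y
  obtain ⟨z, rfl⟩ := QuotientGroup.mk'_surjective (Subgroup.normalClosure (witnessRels g w)) y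
  rw [← QuotientGroup.eq_one_iff]
  have : φ z = 1 := by rw [hφ1]; rfl
  simpa [hφ, witnessMk] using this
end

section
/- No nonzero power of c lies in V: the intersection of V with the cyclic subgroup of F(b,c) generated by c is trivial. -/
/-- The generator `b` of the free group `F(b, c)` on two generators. -/
def fb : FreeGroup Bool := FreeGroup.of false
/-- The generator `c` of the free group `F(b, c)` on two generators. -/
def fc : FreeGroup Bool := FreeGroup.of true

/-- The list of `r + 4` elements `b`, `c⁻¹b⁻¹cbc`, `c⁻²b⁻¹cbc²`, `c⁻³bc³`, and
`c^{-(3+j)} b c^{3+j}` for `j = 1, …, r` of the free group `F(b, c)` (the `i`-th element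
for `i ≥ 4` is `c⁻ⁱ b cⁱ`, corresponding to `j = i - 3`). -/
def vGen (r : ℕ) : Fin (r + 4) → FreeGroup Bool := fun i =>
  if (i : ℕ) = 0 then fb
  else if (i : ℕ) = 1 then fc⁻¹ * fb⁻¹ * fc * fb * fc
  else if (i : ℕ) = 2 then (fc ^ 2)⁻¹ * fb⁻¹ * fc * fb * fc ^ 2
  else if (i : ℕ) = 3 then (fc ^ 3)⁻¹ * fb * fc ^ 3
  else (fc ^ (i : ℕ))⁻¹ * fb * fc ^ (i : ℕ)

namespace Vaux

/-- The set on which `F(b,c)` will act: the integers plus two extra points. -/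
abbrev X := ℤ ⊕ Bool

/-- Image of `b`: swap `-1 ↔ inr false` and `-2 ↔ inr true`. -/
def B : Equiv.Perm X :=
  Equiv.swap (Sum.inl (-1)) (Sum.inr false) * Equiv.swap (Sum.inl (-2)) (Sum.inr true)

/-- Image of `c`: translate the integer part by `-1`, fix the extra points. -/
def C : Equiv.Perm X := Equiv.sumCongr (Equiv.addRight (-1 : ℤ)) (Equiv.refl Bool)

/-- The homomorphism `F(b,c) → Perm X`. -/
def φ : FreeGroup Bool →* Equiv.Perm X :=
  FreeGroup.lift (fun b => if b then C else B)

lemma φ_fb : φ fb = B := by simp [φ, fb]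

lemma φ_fc : φ fc = C := by simp [φ, fc]

lemma B_inl (m : ℤ) (h1 : m ≠ -1) (h2 : m ≠ -2) : B (Sum.inl m) = Sum.inl m := by
  have s2 : Equiv.swap (Sum.inl (-2) : X) (Sum.inr true) (Sum.inl m) = Sum.inl m :=
    Equiv.swap_apply_of_ne_of_ne (by simp [h2]) (by simp)
  have s1 : Equiv.swap (Sum.inl (-1) : X) (Sum.inr false) (Sum.inl m) = Sum.inl m :=
    Equiv.swap_apply_of_ne_of_ne (by simp [h1]) (by simp)
  simp only [B, Equiv.Perm.mul_apply, s2, s1]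

lemma B_m1 : B (Sum.inl (-1)) = Sum.inr false := by
  have s2 : Equiv.swap (Sum.inl (-2) : X) (Sum.inr true) (Sum.inl (-1)) = Sum.inl (-1) :=
    Equiv.swap_apply_of_ne_of_ne (by simp) (by simp)
  simp only [B, Equiv.Perm.mul_apply, s2, Equiv.swap_apply_left]

lemma B_pf : B (Sum.inr false) = Sum.inl (-1) := by
  have s2 : Equiv.swap (Sum.inl (-2) : X) (Sum.inr true) (Sum.inr false) = Sum.inr false :=
    Equiv.swap_apply_of_ne_of_ne (by simp) (by simp)
  simp only [B, Equiv.Perm.mul_apply, s2, Equiv.swap_apply_right]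

lemma B_m2 : B (Sum.inl (-2)) = Sum.inr true := by
  have s1 : Equiv.swap (Sum.inl (-1) : X) (Sum.inr false) (Sum.inr true) = Sum.inr true :=
    Equiv.swap_apply_of_ne_of_ne (by simp) (by simp)
  simp only [B, Equiv.Perm.mul_apply, Equiv.swap_apply_left, s1]

lemma B_pt : B (Sum.inr true) = Sum.inl (-2) := by
  have s1 : Equiv.swap (Sum.inl (-1) : X) (Sum.inr false) (Sum.inl (-2)) = Sum.inl (-2) :=
    Equiv.swap_apply_of_ne_of_ne (by simp) (by simp)
  simp only [B, Equiv.Perm.mul_apply, Equiv.swap_apply_right, s1]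

lemma B_inv : B⁻¹ = B := by
  have h : B * B = 1 := by
    ext x
    rcases x with m | b
    · by_cases h1 : m = -1
      · subst h1; simp [Equiv.Perm.mul_apply, B_m1, B_pf]
      · by_cases h2 : m = -2
        · subst h2; simp [Equiv.Perm.mul_apply, B_m2, B_pt]
        · simp [Equiv.Perm.mul_apply, B_inl m h1 h2]
    · cases b
      · simp [Equiv.Perm.mul_apply, B_pf, B_m1]
      · simp [Equiv.Perm.mul_apply, B_pt, B_m2]
  rw [inv_eq_iff_mul_eq_one, h]

lemma C_inl (m : ℤ) : C (Sum.inl m) = Sum.inl (m - 1) := by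
  simp [C, Equiv.addRight, sub_eq_add_neg]

lemma C_inr (b : Bool) : C (Sum.inr b) = Sum.inr b := by simp [C]

lemma C_pow_inl (n : ℕ) (m : ℤ) : (C ^ n) (Sum.inl m) = Sum.inl (m - n) := by
  induction n with
  | zero => simp
  | succ k ih =>
      rw [pow_succ', Equiv.Perm.mul_apply, ih, C_inl]
      congr 1
      push_cast
      ring

lemma C_pow_inv_inl (n : ℕ) (m : ℤ) : ((C ^ n)⁻¹) (Sum.inl m) = Sum.inl (m + n) := by
  have h : (C ^ n) (Sum.inl (m + n)) = Sum.inl m := by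
    rw [C_pow_inl]; congr 1; ring
  calc ((C ^ n)⁻¹) (Sum.inl m) = ((C ^ n)⁻¹) ((C ^ n) (Sum.inl (m + n))) := by rw [h]
    _ = Sum.inl (m + n) := Equiv.symm_apply_apply _ _

lemma C_inv_inl (m : ℤ) : (C⁻¹) (Sum.inl m) = Sum.inl (m + 1) := by
  have := C_pow_inv_inl 1 m
  simpa using this

lemma C_zpow_inl (k : ℤ) (m : ℤ) : (C ^ k) (Sum.inl m) = Sum.inl (m - k) := by
  rcases k with n | n
  · simpa using C_pow_inl n m
  · rw [zpow_negSucc, C_pow_inv_inl]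
    congr 1

lemma gen_fixes (r : ℕ) (i : Fin (r + 4)) : φ (vGen r i) (Sum.inl 0) = Sum.inl 0 := by
  unfold vGen
  by_cases h0 : (i : ℕ) = 0
  · rw [if_pos h0, φ_fb, B_inl] <;> decide
  rw [if_neg h0]
  by_cases h1 : (i : ℕ) = 1
  · rw [if_pos h1]
    simp only [map_mul, map_inv, φ_fb, φ_fc, Equiv.Perm.mul_apply, B_inv]
    rw [C_inl]
    norm_num
    rw [B_m1, C_inr, B_pf, ← Equiv.Perm.inv_def, C_inv_inl]
    norm_num
  rw [if_neg h1]
  by_cases h2 : (i : ℕ) = 2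
  · rw [if_pos h2]
    simp only [map_mul, map_inv, map_pow, φ_fb, φ_fc, Equiv.Perm.mul_apply, B_inv]
    rw [C_pow_inl]
    norm_num
    rw [B_m2, C_inr, B_pt, ← Equiv.Perm.inv_def, C_pow_inv_inl]
    norm_num
  rw [if_neg h2]
  by_cases h3 : (i : ℕ) = 3
  · rw [if_pos h3]
    simp only [map_mul, map_inv, map_pow, φ_fb, φ_fc, Equiv.Perm.mul_apply]
    rw [C_pow_inl]
    norm_num
    rw [B_inl _ (by norm_num) (by norm_num), ← Equiv.Perm.inv_def, C_pow_inv_inl]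
    norm_num
  · rw [if_neg h3]
    have hi4 : 4 ≤ (i : ℕ) := by omega
    simp only [map_mul, map_inv, map_pow, φ_fb, φ_fc, Equiv.Perm.mul_apply]
    rw [C_pow_inl]
    norm_num
    rw [B_inl _ (by omega) (by omega), ← Equiv.Perm.inv_def, C_pow_inv_inl]
    norm_num

end Vaux

/-- No nonzero power of `c` lies in the subgroup `V` of `F(b,c)`
generated by the `r + 4` listed elements: the intersection of `V` with the cyclic
subgroup generated by `c` is trivial. -/
theorem V_meet_powers_of_c_trivial (r : ℕ) (hr : 1 ≤ r) :
    Subgroup.closure (Set.range (vGen r)) ⊓ Subgroup.zpowers fc = ⊥ := by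
  rw [eq_bot_iff]
  rintro x ⟨hx1, k, rfl⟩
  have hle : Subgroup.closure (Set.range (vGen r)) ≤
      Subgroup.comap Vaux.φ (MulAction.stabilizer (Equiv.Perm Vaux.X) (Sum.inl 0 : Vaux.X)) := by
    rw [Subgroup.closure_le]
    rintro g ⟨i, rfl⟩
    simp only [SetLike.mem_coe, Subgroup.mem_comap, MulAction.mem_stabilizer_iff,
      Equiv.Perm.smul_def]
    exact Vaux.gen_fixes r i
  have hfix := hle hx1
  simp only [Subgroup.mem_comap, MulAction.mem_stabilizer_iff, Equiv.Perm.smul_def] at hfix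
  rw [map_zpow, Vaux.φ_fc, Vaux.C_zpow_inl] at hfix
  have hk : k = 0 := by
    have := Sum.inl.inj hfix
    omega
  simp [hk]
end

section
/- V is a free group freely generated by the listed r + 4 elements: the homomorphism from the free group of rank r + 4 sending the i-th basis element to the i-th element of the list b, c⁻¹ b⁻¹ c b c, c⁻² b⁻¹ c b c², c⁻³ b c³, c^{-(3+j)} b c^{3+j} (j = 1, …, r) is injective. -/
namespace VFG

open FreeGroup List

/-- The one-letter element of the free group. -/
def σ (x : Bool × Bool) : FreeGroup Bool := FreeGroup.mk [x]

abbrev Cm : Bool × Bool := (true, false)   -- c⁻¹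
abbrev Cp : Bool × Bool := (true, true)    -- c
abbrev Bm : Bool × Bool := (false, false)  -- b⁻¹
abbrev Bp : Bool × Bool := (false, true)   -- b

lemma sigma_Bp : σ Bp = fb := rfl
lemma sigma_Cp : σ Cp = fc := rfl
lemma sigma_Bm : σ Bm = fb⁻¹ := by
  rw [show fb = FreeGroup.mk [Bp] from rfl, FreeGroup.inv_mk]; rfl
lemma sigma_Cm : σ Cm = fc⁻¹ := by
  rw [show fc = FreeGroup.mk [Cp] from rfl, FreeGroup.inv_mk]; rfl

lemma toWord_sigma_mul (x : Bool × Bool) (w : FreeGroup Bool) :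
    (σ x * w).toWord = FreeGroup.reduce (x :: w.toWord) := by
  conv_lhs => rw [← FreeGroup.mk_toWord (x := w)]
  rw [σ, FreeGroup.mul_mk, FreeGroup.toWord_mk]
  rfl

lemma reduce_cons_eq (x : Bool × Bool) (l : List (Bool × Bool))
    (hl : FreeGroup.reduce l = l)
    (h : ∀ y ∈ l.head?, ¬(x.1 = y.1 ∧ x.2 = !y.2)) :
    FreeGroup.reduce (x :: l) = x :: l := by
  rw [FreeGroup.reduce.cons, hl]
  cases l with
  | nil => rfl
  | cons hd tl =>
    have h' : ¬(x.1 = hd.1 ∧ x.2 = !hd.2) := h hd (by simp)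
    simp only [List.casesOn]
    exact if_neg h'

/-- multiplying by a non-cancelling letter. -/
lemma toWord_letter_nocancel (x : Bool × Bool) (w : FreeGroup Bool)
    (h : ∀ y ∈ w.toWord.head?, ¬(x.1 = y.1 ∧ x.2 = !y.2)) :
    (σ x * w).toWord = x :: w.toWord := by
  rw [toWord_sigma_mul, reduce_cons_eq x _ (FreeGroup.reduce_toWord w) h]

/-- multiplying by a cancelling letter. -/
lemma toWord_letter_cancel (a b : Bool) (t : List (Bool × Bool)) (w : FreeGroup Bool)
    (h : w.toWord = (a, b) :: t) :
    (σ (a, !b) * w).toWord = t := by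
  have hred : FreeGroup.reduce ((a, b) :: t) = (a, b) :: t := by
    rw [← h]; exact FreeGroup.reduce_toWord w
  rw [toWord_sigma_mul, h, FreeGroup.reduce.cons, hred]
  simp

lemma toWord_pow_mul (x : Bool × Bool) (n : ℕ) (w : FreeGroup Bool)
    (h : ∀ y ∈ w.toWord.head?, ¬(x.1 = y.1 ∧ x.2 = !y.2)) :
    (σ x ^ n * w).toWord = List.replicate n x ++ w.toWord := by
  induction n with
  | zero => simp
  | succ n ih =>
    have hh : ∀ y ∈ (σ x ^ n * w).toWord.head?, ¬(x.1 = y.1 ∧ x.2 = !y.2) := by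
      rw [ih]
      cases n with
      | zero => simpa using h
      | succ m =>
        intro y hy
        simp [List.replicate_succ] at hy
        subst hy
        simp
    rw [pow_succ', mul_assoc, toWord_letter_nocancel x _ hh, ih, List.replicate_succ,
      List.cons_append]

lemma reduced_cons (y : Bool × Bool) (t : List (Bool × Bool))
    (h : FreeGroup.reduce (y :: t) = y :: t) :
    FreeGroup.reduce t = t ∧ ∀ z ∈ t.head?, ¬(y.1 = z.1 ∧ y.2 = !z.2) := by
  rw [FreeGroup.reduce.cons] at h
  rcases ht : FreeGroup.reduce t with _ | ⟨hd, tl⟩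
  · rw [ht] at h
    simp only [List.casesOn] at h
    have : t = [] := by simpa using h.symm
    subst this
    simp at ht ⊢
  · rw [ht] at h
    simp only [List.casesOn] at h
    by_cases hc : y.1 = hd.1 ∧ y.2 = !hd.2
    · rw [if_pos hc] at h
      exfalso
      have hlen : (FreeGroup.reduce t).length ≤ t.length :=
        (FreeGroup.Red.sublist (FreeGroup.reduce.red)).length_le
      rw [ht] at hlen
      have : tl = y :: t := by simpa using h
      subst this
      simp at hlen
    · rw [if_neg hc] at h
      have h2 : t = hd :: tl := by
        have := h
        simp at this
        exact this.symm
      constructor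
      · rw [h2, ← ht, h2]
      · intro z hz
        rw [h2] at hz
        simp at hz
        subst hz
        exact hc

/-- Decomposition of a free group element: strip the leading `c⁻¹`-letters. -/
lemma decomp (n : ℕ) : ∀ (w : FreeGroup Bool), w.toWord.length ≤ n →
    ∃ (k : ℕ) (z : FreeGroup Bool), w = σ Cm ^ k * z ∧
      w.toWord = List.replicate k Cm ++ z.toWord ∧
      z.toWord.head? ≠ some Cm ∧ (0 < k → z.toWord.head? ≠ some Cp) := by
  induction n with
  | zero =>
    intro w hw
    refine ⟨0, w, by simp, by simp, ?_, by simp⟩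
    have : w.toWord = [] := List.length_eq_zero_iff.mp (Nat.le_zero.mp hw)
    simp [this]
  | succ n ih =>
    intro w hw
    by_cases hC : w.toWord.head? = some Cm
    · obtain ⟨t, ht⟩ : ∃ t, w.toWord = Cm :: t := by
        rcases hw' : w.toWord with _ | ⟨hd, tl⟩
        · rw [hw'] at hC; simp at hC
        · rw [hw'] at hC; simp at hC; exact ⟨tl, by rw [hC]⟩
      have hz : (σ Cp * w).toWord = t := by
        have := toWord_letter_cancel true false t w ht
        exact this
      have hlen : (σ Cp * w).toWord.length ≤ n := by
        rw [hz]
        have := hw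
        rw [ht] at this
        simpa using this
      obtain ⟨k, z, h1, h2, h3, h4⟩ := ih (σ Cp * w) hlen
      have hw_eq : w = σ Cm ^ (k + 1) * z := by
        have : σ Cm * (σ Cp * w) = w := by
          rw [sigma_Cm, sigma_Cp, ← mul_assoc, inv_mul_cancel, one_mul]
        rw [← this, h1, pow_succ', mul_assoc]
      have hhead : 0 < k + 1 → z.toWord.head? ≠ some Cp := by
        intro _
        rcases Nat.eq_zero_or_pos k with hk | hk
        · subst hk
          have hzt : z.toWord = t := by
            rw [← hz]
            simpa using h2.symm
          have hredt : FreeGroup.reduce (Cm :: t) = Cm :: t := by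
            rw [← ht]; exact FreeGroup.reduce_toWord w
          have := (reduced_cons Cm t hredt).2
          rw [hzt]
          intro hcon
          rcases ht2 : t with _ | ⟨hd, tl⟩
          · rw [ht2] at hcon; simp at hcon
          · rw [ht2] at hcon; simp at hcon
            exact this hd (by rw [ht2]; simp) (by rw [hcon]; exact ⟨rfl, rfl⟩)
        · exact h4 hk
      refine ⟨k + 1, z, hw_eq, ?_, h3, hhead⟩
      have h2' : t = List.replicate k Cm ++ z.toWord := by rw [← hz]; exact h2
      rw [ht, h2', List.replicate_succ, List.cons_append]
    · exact ⟨0, w, by simp, by simp, hC, by simp⟩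

lemma pow_mul_pow_inv {G : Type*} [Group G] (g : G) (z : G) {i k : ℕ} (h : k ≤ i) :
    g ^ i * (g⁻¹ ^ k * z) = g ^ (i - k) * z := by
  have hgi : g ^ i = g ^ (i - k) * g ^ k := by rw [← pow_add]; congr 1; omega
  rw [inv_pow, hgi, mul_assoc, ← mul_assoc (g ^ k), mul_inv_cancel, one_mul]

lemma pow_mul_pow_inv' {G : Type*} [Group G] (g : G) (z : G) {i k : ℕ} (h : i ≤ k) :
    g ^ i * (g⁻¹ ^ k * z) = g⁻¹ ^ (k - i) * z := by
  have hgk : g⁻¹ ^ k = g⁻¹ ^ i * g⁻¹ ^ (k - i) := by rw [← pow_add]; congr 1; omega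
  have h1 : g ^ i * g⁻¹ ^ i = 1 := by rw [inv_pow, mul_inv_cancel]
  rw [hgk, ← mul_assoc, ← mul_assoc, h1, one_mul]

/-- The key middle step: after multiplying by `c^i`, either the word starts with a
`c`-letter, or the original word was exactly `c^{-i}` times the result. -/
lemma mid (i : ℕ) (w : FreeGroup Bool) :
    (∃ hd t, (fc ^ i * w).toWord = hd :: t ∧ (hd).1 = true) ∨
      (w.toWord = List.replicate i Cm ++ (fc ^ i * w).toWord) := by
  obtain ⟨k, z, h1, h2, h3, h4⟩ := decomp w.toWord.length w le_rfl
  rcases lt_trichotomy k i with hk | hk | hk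
  · left
    have hgrp : fc ^ i * w = σ Cp ^ (i - k) * z := by
      rw [h1, sigma_Cm, sigma_Cp]
      exact pow_mul_pow_inv fc z hk.le
    have hnc : ∀ y ∈ z.toWord.head?, ¬(Cp.1 = y.1 ∧ Cp.2 = !y.2) := by
      intro y hy hcon
      apply h3
      rw [Option.mem_def] at hy
      rw [hy]
      congr 1
      obtain ⟨hc1, hc2⟩ := hcon
      have : y = (true, false) := by
        obtain ⟨y1, y2⟩ := y
        simp at hc1 hc2
        simp [← hc1]
        cases y2 <;> simp_all
      rw [this]
    have htw : (fc ^ i * w).toWord = List.replicate (i - k) Cp ++ z.toWord := by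
      rw [hgrp, toWord_pow_mul Cp (i - k) z hnc]
    obtain ⟨j, hj⟩ : ∃ j, i - k = j + 1 := ⟨i - k - 1, by omega⟩
    refine ⟨Cp, List.replicate j Cp ++ z.toWord, ?_, rfl⟩
    rw [htw, hj, List.replicate_succ, List.cons_append]
  · right
    have hgrp : fc ^ i * w = z := by
      rw [h1, sigma_Cm, ← hk, ← mul_assoc, inv_pow, mul_inv_cancel, one_mul]
    rw [hgrp, ← hk]
    exact h2
  · left
    have hgrp : fc ^ i * w = σ Cm ^ (k - i) * z := by
      rw [h1, sigma_Cm]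
      exact pow_mul_pow_inv' fc z hk.le
    have hnc : ∀ y ∈ z.toWord.head?, ¬(Cm.1 = y.1 ∧ Cm.2 = !y.2) := by
      intro y hy hcon
      apply h4 (by omega)
      rw [Option.mem_def] at hy
      rw [hy]
      congr 1
      obtain ⟨hc1, hc2⟩ := hcon
      obtain ⟨y1, y2⟩ := y
      simp at hc1 hc2
      simp [← hc1]
      cases y2 <;> simp_all
    have htw : (fc ^ i * w).toWord = List.replicate (k - i) Cm ++ z.toWord := by
      rw [hgrp, toWord_pow_mul Cm (k - i) z hnc]
    obtain ⟨j, hj⟩ : ∃ j, k - i = j + 1 := ⟨k - i - 1, by omega⟩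
    refine ⟨Cm, List.replicate j Cm ++ z.toWord, ?_, rfl⟩
    rw [htw, hj, List.replicate_succ, List.cons_append]

/-- The "tail" of the ping-pong prefix: `[b^d]` in the letter case and
`[b⁻¹, c^d]` in the conjugated case. -/
def ztail (d : Bool) (i : ℕ) : List (Bool × Bool) :=
  if i = 1 ∨ i = 2 then [Bm, (true, d)] else [(false, d)]

/-- The ping-pong sets. -/
def pset (d : Bool) (i : ℕ) : Set (FreeGroup Bool) :=
  {w | (List.replicate i Cm ++ ztail d i) <+: w.toWord}

lemma wrap (i : ℕ) (m : FreeGroup Bool) (d : Bool)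
    (h : m.toWord.head? = some (false, d)) :
    ((fc ^ i)⁻¹ * m).toWord = List.replicate i Cm ++ m.toWord := by
  have : (fc ^ i)⁻¹ = σ Cm ^ i := by rw [sigma_Cm, inv_pow]
  rw [this]
  apply toWord_pow_mul
  intro y hy hcon
  rw [Option.mem_def, h] at hy
  obtain rfl : (false, d) = y := by simpa using hy
  simpa using hcon.1

/-- Main computation, letter case (`i ∉ {1,2}`): multiplication by `c^{-i} b^{±1} c^i`. -/
lemma main_letter (i : ℕ) (d : Bool) (w : FreeGroup Bool)
    (h : ¬ (List.replicate i Cm ++ [(false, !d)]) <+: w.toWord) :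
    (List.replicate i Cm ++ [(false, d)]) <+:
      ((fc ^ i)⁻¹ * (σ (false, d) * (fc ^ i * w))).toWord := by
  have key : ∀ y ∈ (fc ^ i * w).toWord.head?, ¬((false, d).1 = y.1 ∧ (false, d).2 = !y.2) := by
    rcases mid i w with ⟨hd, t, hm, h1⟩ | hright
    · intro y hy hcon
      rw [Option.mem_def, hm] at hy
      simp at hy
      subst hy
      rw [← hcon.1] at h1
      simp at h1
    · intro y hy hcon
      apply h
      rw [hright]
      rw [List.prefix_append_right_inj]
      rw [Option.mem_def] at hy
      rcases hm : (fc ^ i * w).toWord with _ | ⟨hd, tl⟩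
      · rw [hm] at hy; simp at hy
      · rw [hm] at hy; simp at hy
        subst hy
        refine ⟨tl, ?_⟩
        obtain ⟨a1, a2⟩ := hd
        obtain ⟨h1, h2⟩ := hcon
        simp at h1 h2
        subst h1
        subst h2
        simp
  have step1 : (σ (false, d) * (fc ^ i * w)).toWord = (false, d) :: (fc ^ i * w).toWord :=
    toWord_letter_nocancel _ _ key
  have step2 := wrap i (σ (false, d) * (fc ^ i * w)) d (by rw [step1]; rfl)
  rw [step2, step1]
  exact ⟨(fc ^ i * w).toWord, by simp⟩

/-- Main computation, conjugated case (`i ∈ {1,2}`): multiplication by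
`c^{-i} (b⁻¹ c^{±1} b) c^i`. -/
lemma main_conj (i : ℕ) (d : Bool) (w : FreeGroup Bool)
    (h : ¬ (List.replicate i Cm ++ [Bm, (true, !d)]) <+: w.toWord) :
    (List.replicate i Cm ++ [Bm, (true, d)]) <+:
      ((fc ^ i)⁻¹ * (fb⁻¹ * (σ (true, d) * (fb * (fc ^ i * w))))).toWord := by
  set m := fc ^ i * w with hm_def
  -- First compute (fb * m).toWord, in two possible shapes
  have main2 : ∃ t2, (σ (true, d) * (fb * m)).toWord = (true, d) :: t2 := by
    rcases mid i w with ⟨hd, t, hm, h1⟩ | hright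
    · -- head of m is a c-letter; no cancellation with b
      have s1 : (fb * m).toWord = Bp :: m.toWord := by
        rw [← sigma_Bp]
        apply toWord_letter_nocancel
        intro y hy hcon
        rw [Option.mem_def, hm_def, hm] at hy
        simp at hy
        subst hy
        rw [← hcon.1] at h1
        simp at h1
      refine ⟨Bp :: m.toWord, ?_⟩
      rw [← s1]
      apply toWord_letter_nocancel
      intro y hy hcon
      rw [Option.mem_def, s1] at hy
      simp at hy
      subst hy
      simp at hcon
    · -- m.toWord is the tail of w.toWord after replicate i Cm
      have hh : ¬ ([Bm, (true, !d)] <+: m.toWord) := by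
        intro hcon
        apply h
        rw [hright, List.prefix_append_right_inj]
        exact hcon
      by_cases hB : m.toWord.head? = some Bm
      · -- cancellation of b with b⁻¹
        obtain ⟨t2, ht2⟩ : ∃ t2, m.toWord = Bm :: t2 := by
          rcases hm : m.toWord with _ | ⟨hd, tl⟩
          · rw [hm] at hB; simp at hB
          · rw [hm] at hB; simp at hB; exact ⟨tl, by rw [hB]⟩
        have s1 : (fb * m).toWord = t2 := by
          rw [← sigma_Bp]
          exact toWord_letter_cancel false false t2 m ht2
        have ht2h : t2.head? ≠ some (true, !d) := by
          intro hcon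
          apply hh
          rcases ht : t2 with _ | ⟨hd, tl⟩
          · rw [ht] at hcon; simp at hcon
          · rw [ht] at hcon; simp at hcon
            rw [ht2, ht, hcon]
            exact ⟨tl, rfl⟩
        refine ⟨t2, ?_⟩
        rw [← s1]
        apply toWord_letter_nocancel
        intro y hy hcon
        rw [Option.mem_def, s1] at hy
        apply ht2h
        rw [hy]
        obtain ⟨y1, y2⟩ := y
        obtain ⟨hc1, hc2⟩ := hcon
        simp at hc1 hc2
        simp [← hc1]
        cases y2 <;> simp_all
      · -- no cancellation
        have s1 : (fb * m).toWord = Bp :: m.toWord := by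
          rw [← sigma_Bp]
          apply toWord_letter_nocancel
          intro y hy hcon
          apply hB
          rw [Option.mem_def] at hy
          rw [hy]
          obtain ⟨y1, y2⟩ := y
          obtain ⟨hc1, hc2⟩ := hcon
          simp at hc1 hc2
          simp [← hc1]
          cases y2 <;> simp_all
        refine ⟨Bp :: m.toWord, ?_⟩
        rw [← s1]
        apply toWord_letter_nocancel
        intro y hy hcon
        rw [Option.mem_def, s1] at hy
        simp at hy
        subst hy
        simp at hcon
  obtain ⟨t2, ht2⟩ := main2
  have s3 : (fb⁻¹ * (σ (true, d) * (fb * m))).toWord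
      = Bm :: (true, d) :: t2 := by
    rw [← sigma_Bm]
    have := toWord_letter_nocancel Bm (σ (true, d) * (fb * m)) (by
      intro y hy hcon
      rw [Option.mem_def, ht2] at hy
      simp at hy
      subst hy
      simp at hcon)
    rw [this, ht2]
  have s4 := wrap i (fb⁻¹ * (σ (true, d) * (fb * m))) false (by rw [s3]; rfl)
  rw [s4, s3]
  exact ⟨t2, by simp⟩


lemma ztail_head (d : Bool) (i : ℕ) : ∃ e, (ztail d i)[0]? = some (false, e) := by
  unfold ztail; split
  · exact ⟨false, rfl⟩
  · exact ⟨d, rfl⟩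

lemma ztail_length_pos (d : Bool) (i : ℕ) : 0 < (ztail d i).length := by
  unfold ztail; split <;> simp

lemma mk_ztail_toWord (d : Bool) (i : ℕ) :
    (FreeGroup.mk (ztail d i)).toWord = ztail d i := by
  rw [FreeGroup.toWord_mk]
  unfold ztail
  split
  · cases d <;> rfl
  · cases d <;> rfl

lemma pset_nonempty (d : Bool) (i : ℕ) : (pset d i).Nonempty := by
  refine ⟨σ Cm ^ i * FreeGroup.mk (ztail d i), ?_⟩
  show (List.replicate i Cm ++ ztail d i) <+: _
  rw [toWord_pow_mul Cm i _ (by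
    intro y hy hcon
    rw [Option.mem_def, mk_ztail_toWord] at hy
    obtain ⟨e, he⟩ := ztail_head d i
    rw [← List.head?_eq_getElem?] at he
    rw [he] at hy
    obtain rfl : (false, e) = y := by simpa using hy
    simpa using hcon.1)]
  rw [mk_ztail_toWord]

lemma pre_get_lt (d : Bool) (i m : ℕ) (hm : m < i) :
    (List.replicate i Cm ++ ztail d i)[m]? = some Cm := by
  rw [List.getElem?_append_left (by simpa using hm), List.getElem?_replicate, if_pos hm]

lemma pre_get_ge (d : Bool) (i k : ℕ) :
    (List.replicate i Cm ++ ztail d i)[i + k]? = (ztail d i)[k]? := by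
  rw [List.getElem?_append_right (by simp)]
  simp

lemma pre_get_self (d : Bool) (i : ℕ) :
    (List.replicate i Cm ++ ztail d i)[i]? = (ztail d i)[0]? := by
  rw [List.getElem?_append_right (by simp)]
  simp

lemma disjoint_presets {p q : List (Bool × Bool)} (m : ℕ) (hp : m < p.length)
    (hq : m < q.length) (hne : p[m]? ≠ q[m]?) :
    Disjoint {w : FreeGroup Bool | p <+: w.toWord} {w : FreeGroup Bool | q <+: w.toWord} := by
  rw [Set.disjoint_left]
  rintro w ⟨t1, h1⟩ ⟨t2, h2⟩
  apply hne
  rw [← List.getElem?_append_left (l₂ := t1) hp, h1, ← h2, List.getElem?_append_left hq]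

lemma disj_lt (d e : Bool) (i j : ℕ) (hij : i < j) : Disjoint (pset d i) (pset e j) := by
  apply disjoint_presets (m := i)
  · have := ztail_length_pos d i
    simp
    omega
  · have := ztail_length_pos e j
    simp
    omega
  · obtain ⟨e1, he1⟩ := ztail_head d i
    rw [pre_get_self, he1, pre_get_lt e j i hij]
    simp

lemma disj_de (i : ℕ) : Disjoint (pset true i) (pset false i) := by
  by_cases h12 : i = 1 ∨ i = 2
  · apply disjoint_presets (m := i + 1)
    · simp [ztail, h12]
    · simp [ztail, h12]
    · rw [pre_get_ge true i 1, pre_get_ge false i 1]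
      simp [ztail, h12]
  · apply disjoint_presets (m := i)
    · have := ztail_length_pos true i
      simp
      omega
    · have := ztail_length_pos false i
      simp
      omega
    · rw [pre_get_self, pre_get_self]
      simp [ztail, h12]

lemma vGen_mul (r : ℕ) (i : Fin (r + 4)) (w : FreeGroup Bool)
    (h12 : ¬((i : ℕ) = 1 ∨ (i : ℕ) = 2)) :
    vGen r i * w = (fc ^ (i : ℕ))⁻¹ * (σ (false, true) * (fc ^ (i : ℕ) * w)) := by
  push_neg at h12
  rw [sigma_Bp]
  unfold vGen
  by_cases h0 : (i : ℕ) = 0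
  · rw [if_pos h0, h0]
    group
  · rw [if_neg h0, if_neg h12.1, if_neg h12.2]
    by_cases h3 : (i : ℕ) = 3
    · rw [if_pos h3, h3]
      group
    · rw [if_neg h3]
      group

lemma vGen_inv_mul (r : ℕ) (i : Fin (r + 4)) (w : FreeGroup Bool)
    (h12 : ¬((i : ℕ) = 1 ∨ (i : ℕ) = 2)) :
    (vGen r i)⁻¹ * w = (fc ^ (i : ℕ))⁻¹ * (σ (false, false) * (fc ^ (i : ℕ) * w)) := by
  push_neg at h12
  rw [sigma_Bm]
  unfold vGen
  by_cases h0 : (i : ℕ) = 0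
  · rw [if_pos h0, h0]
    group
  · rw [if_neg h0, if_neg h12.1, if_neg h12.2]
    by_cases h3 : (i : ℕ) = 3
    · rw [if_pos h3, h3]
      group
    · rw [if_neg h3]
      group

lemma vGen_mul_conj (r : ℕ) (i : Fin (r + 4)) (w : FreeGroup Bool)
    (h12 : (i : ℕ) = 1 ∨ (i : ℕ) = 2) :
    vGen r i * w = (fc ^ (i : ℕ))⁻¹ * (fb⁻¹ * (σ (true, true) * (fb * (fc ^ (i : ℕ) * w)))) := by
  rw [sigma_Cp]
  unfold vGen
  rcases h12 with h1 | h2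
  · rw [if_neg (by omega), if_pos h1, h1]
    group
  · rw [if_neg (by omega), if_neg (by omega), if_pos h2, h2]
    group

lemma vGen_inv_mul_conj (r : ℕ) (i : Fin (r + 4)) (w : FreeGroup Bool)
    (h12 : (i : ℕ) = 1 ∨ (i : ℕ) = 2) :
    (vGen r i)⁻¹ * w
      = (fc ^ (i : ℕ))⁻¹ * (fb⁻¹ * (σ (true, false) * (fb * (fc ^ (i : ℕ) * w)))) := by
  rw [sigma_Cm]
  unfold vGen
  rcases h12 with h1 | h2
  · rw [if_neg (by omega), if_pos h1, h1]
    group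
  · rw [if_neg (by omega), if_neg (by omega), if_pos h2, h2]
    group

/-- The combined ping-pong step. -/
lemma pingpong_step (r : ℕ) (i : Fin (r + 4)) (d : Bool) (w : FreeGroup Bool)
    (hw : w ∉ pset (!d) (i : ℕ)) :
    (if d then vGen r i else (vGen r i)⁻¹) * w ∈ pset d (i : ℕ) := by
  have hw' : ¬ (List.replicate (i : ℕ) Cm ++ ztail (!d) (i : ℕ)) <+: w.toWord := hw
  by_cases h12 : (i : ℕ) = 1 ∨ (i : ℕ) = 2
  · have hzt : ∀ e : Bool, ztail e (i : ℕ) = [Bm, (true, e)] := by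
      intro e; unfold ztail; rw [if_pos h12]
    have hyp : ¬ (List.replicate (i : ℕ) Cm ++ [Bm, (true, !d)]) <+: w.toWord := by
      rw [← hzt]; exact hw'
    have key := main_conj (i : ℕ) d w hyp
    show (List.replicate (i : ℕ) Cm ++ ztail d (i : ℕ)) <+: _
    rw [hzt d]
    cases d
    · rw [if_neg (by simp), vGen_inv_mul_conj r i w h12]
      exact key
    · rw [if_pos (by simp), vGen_mul_conj r i w h12]
      exact key
  · have hzt : ∀ e : Bool, ztail e (i : ℕ) = [(false, e)] := by
      intro e; unfold ztail; rw [if_neg h12]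
    have hyp : ¬ (List.replicate (i : ℕ) Cm ++ [(false, !d)]) <+: w.toWord := by
      rw [← hzt]; exact hw'
    have key := main_letter (i : ℕ) d w hyp
    show (List.replicate (i : ℕ) Cm ++ ztail d (i : ℕ)) <+: _
    rw [hzt d]
    cases d
    · rw [if_neg (by simp), vGen_inv_mul r i w h12]
      exact key
    · rw [if_pos (by simp), vGen_mul r i w h12]
      exact key

end VFG

/-- `V` is a free group freely generated by the listed `r + 4`
elements: the homomorphism from the free group of rank `r + 4` sending the `i`-th basis
element to the `i`-th element of the list is injective. -/
theorem V_freely_generated (r : ℕ) (hr : 1 ≤ r) :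
    Function.Injective ⇑(FreeGroup.lift (vGen r)) := by
  classical
  have hnt : Nontrivial (Fin (r + 4)) :=
    ⟨⟨⟨0, by omega⟩, ⟨1, by omega⟩, by simp [Fin.ext_iff]⟩⟩
  have hvalne : ∀ i j : Fin (r + 4), i ≠ j → (i : ℕ) ≠ (j : ℕ) := by
    intro i j hij hc
    exact hij (Fin.ext hc)
  apply FreeGroup.injective_lift_of_ping_pong (vGen r)
    (fun i : Fin (r + 4) => VFG.pset true (i : ℕ))
    (fun i : Fin (r + 4) => VFG.pset false (i : ℕ))
  · intro i
    exact VFG.pset_nonempty true (i : ℕ)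
  · intro i j hij
    rcases (hvalne i j hij).lt_or_gt with h | h
    · exact VFG.disj_lt true true _ _ h
    · exact (VFG.disj_lt true true _ _ h).symm
  · intro i j hij
    rcases (hvalne i j hij).lt_or_gt with h | h
    · exact VFG.disj_lt false false _ _ h
    · exact (VFG.disj_lt false false _ _ h).symm
  · intro i j
    rcases lt_trichotomy (i : ℕ) (j : ℕ) with h | h | h
    · exact VFG.disj_lt true false _ _ h
    · rw [h]
      exact VFG.disj_de (j : ℕ)
    · exact (VFG.disj_lt false true _ _ h).symm
  · intro i x hx
    obtain ⟨w, hw, rfl⟩ := Set.mem_smul_set.mp hx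
    rw [smul_eq_mul]
    have := VFG.pingpong_step r i true w (by simpa using hw)
    simpa using this
  · intro i x hx
    obtain ⟨w, hw, rfl⟩ := Set.mem_smul_set.mp hx
    rw [Pi.inv_apply, smul_eq_mul]
    have := VFG.pingpong_step r i false w (by simpa using hw)
    simpa using this
end

section
/- In the free product D = X ∗ F(a,b) of X with the free group on two generators a, b, the r + 4 elements b, a⁻¹ b a, a⁻² b⁻¹ a b a², a⁻³ [w,b] a³, and a^{-(3+j)} g_j b a^{3+j} for j = 1, …, r freely generate a free subgroup of rank r + 4 (the homomorphism from the free group of rank r + 4 sending the i-th basis element to the i-th listed element is injective). -/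
open Monoid

section

variable (X : Type) [Group X]

/-- The generator `a` of the free factor `F(a, b)` inside `D = X ∗ F(a, b)`. -/
def dA : Coprod X (FreeGroup Bool) := Coprod.inr (FreeGroup.of false)
/-- The generator `b` of the free factor `F(a, b)` inside `D = X ∗ F(a, b)`. -/
def dB : Coprod X (FreeGroup Bool) := Coprod.inr (FreeGroup.of true)

variable {X}

/-- The list of `r + 4` elements `b`, `a⁻¹ba`, `a⁻²b⁻¹aba²`, `a⁻³[w,b]a³`
(with `[w,b] = w⁻¹b⁻¹wb`), and `a^{-(3+j)} gⱼ b a^{3+j}` for `j = 1, …, r`, of the free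
product `D = X ∗ F(a, b)` (the `i`-th element for `i ≥ 4` is
`a⁻ⁱ g_{i-3} b aⁱ`, corresponding to `j = i - 3`). -/
def dGen {r : ℕ} (g : Fin r → X) (w : X) : Fin (r + 4) → Coprod X (FreeGroup Bool) :=
  fun i =>
    if h4 : (i : ℕ) < 4 then
      ![dB X,
        (dA X)⁻¹ * dB X * dA X,
        (dA X ^ 2)⁻¹ * (dB X)⁻¹ * dA X * dB X * dA X ^ 2,
        (dA X ^ 3)⁻¹ * ((Coprod.inl w)⁻¹ * (dB X)⁻¹ * Coprod.inl w * dB X) * dA X ^ 3]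
        ⟨(i : ℕ), h4⟩
    else
      (dA X ^ (i : ℕ))⁻¹ *
        Coprod.inl (g ⟨(i : ℕ) - 4, by have := i.isLt; omega⟩) * dB X * dA X ^ (i : ℕ)

end

namespace PP17
set_option linter.unusedSectionVars false
attribute [local instance] Classical.propDecidable

variable {X : Type} [Group X]

/-- Letters: nontrivial elements of `X`, or signed generators `(c, s)` with `c = false ↦ a`,
`c = true ↦ b`, `s = true ↦ +1`. -/
abbrev Λ (X : Type) := X ⊕ Bool × Bool

def af : Λ X := Sum.inr (false, true)
def ai : Λ X := Sum.inr (false, false)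
def bf : Λ X := Sum.inr (true, true)
def bi : Λ X := Sum.inr (true, false)

/-- No cancellation between adjacent letters. -/
def nc : Λ X → Λ X → Prop
  | Sum.inl _, Sum.inl _ => False
  | Sum.inr p, Sum.inr q => ¬(q.1 = p.1 ∧ q.2 = !p.2)
  | _, _ => True

@[simp] lemma nc_inl_inl (x y : X) : nc (Sum.inl x) (Sum.inl y) ↔ False := Iff.rfl
@[simp] lemma nc_inl_inr (x : X) (p) : nc (Sum.inl x) (Sum.inr p) := trivial
@[simp] lemma nc_inr_inl (p) (x : X) : nc (Sum.inr p) (Sum.inl x) := trivial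
@[simp] lemma nc_inr_inr (p q : Bool × Bool) :
    nc (X := X) (Sum.inr p) (Sum.inr q) ↔ ¬(q.1 = p.1 ∧ q.2 = !p.2) := Iff.rfl

/-- Reduced words. -/
def Red (l : List (Λ X)) : Prop := l.Chain' nc ∧ ∀ x : X, Sum.inl x ∈ l → x ≠ 1

lemma Red.nil : Red ([] : List (Λ X)) := ⟨List.isChain_nil, by simp⟩

lemma Red.tail {ℓ : Λ X} {t : List (Λ X)} (h : Red (ℓ :: t)) : Red t :=
  ⟨(List.isChain_cons.1 h.1).2, fun x hx => h.2 x (List.mem_cons_of_mem _ hx)⟩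

noncomputable def pushX (x : X) : List (Λ X) → List (Λ X)
  | Sum.inl y :: t => if x * y = 1 then t else Sum.inl (x * y) :: t
  | l => if x = 1 then l else Sum.inl x :: l

def pushG (c s : Bool) : List (Λ X) → List (Λ X)
  | Sum.inr p :: t => if p.1 = c ∧ p.2 = !s then t else Sum.inr (c, s) :: Sum.inr p :: t
  | l => Sum.inr (c, s) :: l

@[simp] lemma pushX_nil (x : X) :
    pushX x ([] : List (Λ X)) = if x = 1 then [] else [Sum.inl x] := rfl
@[simp] lemma pushX_inr (x : X) (p) (t : List (Λ X)) :
    pushX x (Sum.inr p :: t) = if x = 1 then Sum.inr p :: t else Sum.inl x :: Sum.inr p :: t := rfl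
@[simp] lemma pushX_inl (x y : X) (t : List (Λ X)) :
    pushX x (Sum.inl y :: t) = if x * y = 1 then t else Sum.inl (x * y) :: t := rfl
@[simp] lemma pushG_nil (c s : Bool) :
    pushG (X := X) c s [] = [Sum.inr (c, s)] := rfl
@[simp] lemma pushG_inl (c s : Bool) (y : X) (t) :
    pushG c s (Sum.inl y :: t) = Sum.inr (c, s) :: Sum.inl y :: t := rfl
@[simp] lemma pushG_inr (c s : Bool) (p) (t : List (Λ X)) :
    pushG c s (Sum.inr p :: t) =
      if p.1 = c ∧ p.2 = !s then t else Sum.inr (c, s) :: Sum.inr p :: t := rfl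

lemma pushG_cons (c s : Bool) {l : List (Λ X)} (h : l.head? ≠ some (Sum.inr (c, !s))) :
    pushG c s l = Sum.inr (c, s) :: l := by
  match l with
  | [] => rfl
  | Sum.inl y :: t => rfl
  | Sum.inr p :: t =>
    rw [pushG_inr, if_neg]
    rintro ⟨h1, h2⟩
    exact h (by simp [← h1, ← h2])

lemma pushG_cancel (c s : Bool) (t : List (Λ X)) :
    pushG c s (Sum.inr (c, !s) :: t) = t := by simp

lemma red_pushX (x : X) {l : List (Λ X)} (h : Red l) : Red (pushX x l) := by
  match l with
  | [] =>
    rw [pushX_nil]; split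
    · exact Red.nil
    · refine ⟨List.isChain_singleton _, ?_⟩
      intro a ha
      simp at ha
      subst ha
      assumption
  | Sum.inl y :: t =>
    rw [pushX_inl]
    have ht : Red t := h.tail
    have hhd : ∀ z ∈ t.head?, nc (X := X) (Sum.inl y) z := (List.isChain_cons.1 h.1).1
    split
    · exact ht
    · refine ⟨List.isChain_cons.2 ⟨fun z hz => ?_, ht.1⟩, ?_⟩
      · have := hhd z hz
        cases z with
        | inl a => simp at this
        | inr p => simp
      · intro a ha
        rcases List.mem_cons.1 ha with h1 | h1
        · rw [Sum.inl.injEq] at h1; rw [h1]; assumption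
        · exact ht.2 a h1
  | Sum.inr p :: t =>
    rw [pushX_inr]
    split
    · exact h
    · refine ⟨List.isChain_cons.2 ⟨fun z hz => ?_, h.1⟩, ?_⟩
      · simp at hz; subst hz; simp
      · intro a ha
        rcases List.mem_cons.1 ha with h1 | h1
        · rw [Sum.inl.injEq] at h1; rw [h1]; assumption
        · exact h.2 a h1

lemma red_pushG (c s : Bool) {l : List (Λ X)} (h : Red l) : Red (pushG c s l) := by
  match l with
  | [] => exact ⟨List.isChain_singleton _, by simp⟩
  | Sum.inl y :: t =>
    rw [pushG_inl]
    refine ⟨List.isChain_cons.2 ⟨fun z hz => ?_, h.1⟩, ?_⟩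
    · simp at hz; subst hz; simp
    · intro a ha
      rcases List.mem_cons.1 ha with h1 | h1
      · simp at h1
      · exact h.2 a h1
  | Sum.inr p :: t =>
    rw [pushG_inr]
    split
    · exact h.tail
    · refine ⟨List.isChain_cons.2 ⟨fun z hz => ?_, h.1⟩, ?_⟩
      · simp at hz; subst hz; simp only [nc_inr_inr]; tauto
      · intro a ha
        rcases List.mem_cons.1 ha with h1 | h1
        · simp at h1
        · exact h.2 a h1

lemma pushX_one {l : List (Λ X)} (h : Red l) : pushX 1 l = l := by
  match l with
  | [] => simp
  | Sum.inl y :: t =>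
    have : y ≠ 1 := h.2 y (List.mem_cons_self)
    simp [this]
  | Sum.inr p :: t => simp

lemma pushX_mul (x y : X) {l : List (Λ X)} (h : Red l) :
    pushX (x * y) l = pushX x (pushX y l) := by
  match l with
  | [] =>
    by_cases hy : y = 1
    · subst hy; rw [mul_one]; simp
    · simp only [pushX_nil, if_neg hy]
      by_cases hxy : x * y = 1
      · simp [hxy]
      · simp [hxy, hy]
  | Sum.inl z :: t =>
    have hz : z ≠ 1 := h.2 z (List.mem_cons_self)
    by_cases hyz : y * z = 1
    · have hxyz : x * y * z = x := by rw [mul_assoc, hyz, mul_one]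
      rw [pushX_inl, pushX_inl, if_pos hyz, hxyz]
      have hhd : ∀ w ∈ t.head?, nc (X := X) (Sum.inl z) w := (List.isChain_cons.1 h.1).1
      match t with
      | [] => simp
      | Sum.inl u :: t' => have := hhd _ rfl; simp at this
      | Sum.inr p :: t' => simp
    · rw [pushX_inl, pushX_inl, if_neg hyz, pushX_inl]
      by_cases hxyz : x * y * z = 1
      · rw [if_pos hxyz, if_pos (by rw [← mul_assoc]; exact hxyz)]
      · rw [if_neg hxyz, if_neg (by rw [← mul_assoc]; exact hxyz), mul_assoc]
  | Sum.inr p :: t =>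
    by_cases hy : y = 1
    · subst hy; rw [mul_one]; simp
    · rw [pushX_inr, pushX_inr, if_neg hy, pushX_inl]

lemma pushG_pushG (c s : Bool) {l : List (Λ X)} (h : Red l) :
    pushG c s (pushG c (!s) l) = l := by
  match l with
  | [] => simp
  | Sum.inl y :: t => rw [pushG_inl, pushG_inr]; simp
  | Sum.inr p :: t =>
    rw [pushG_inr]
    by_cases hc : p.1 = c ∧ p.2 = !(!s)
    · rw [if_pos hc]
      obtain ⟨hc1, hc2⟩ := hc
      have hp : p = (c, s) := by
        obtain ⟨p1, p2⟩ := p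
        simp only [Bool.not_not] at hc1 hc2
        simp [hc1, hc2]
      subst hp
      have hhd : ∀ w ∈ t.head?, nc (X := X) (Sum.inr (c, s)) w := (List.isChain_cons.1 h.1).1
      match t with
      | [] => simp
      | Sum.inl u :: t' => simp
      | Sum.inr q :: t' =>
        have := hhd _ rfl
        rw [pushG_inr, if_neg]
        intro hq
        exact (nc_inr_inr _ q).1 this ⟨hq.1, hq.2⟩
    · rw [if_neg hc, pushG_inr, if_pos ⟨rfl, by simp⟩]

/-- The set of reduced words, on which `D` will act. -/
def Wrd (X : Type) [Group X] := {l : List (Λ X) // Red l}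

/-- The permutation of `Wrd X` given by left multiplication by `x ∈ X`. -/
noncomputable def pXE (x : X) : Equiv.Perm (Wrd X) where
  toFun u := ⟨pushX x u.1, red_pushX x u.2⟩
  invFun u := ⟨pushX x⁻¹ u.1, red_pushX x⁻¹ u.2⟩
  left_inv u := Subtype.ext <| by
    simp only
    rw [← pushX_mul _ _ u.2, inv_mul_cancel, pushX_one u.2]
  right_inv u := Subtype.ext <| by
    simp only
    rw [← pushX_mul _ _ u.2, mul_inv_cancel, pushX_one u.2]

/-- The action of `X` on reduced words, as a homomorphism. -/
noncomputable def phiX : X →* Equiv.Perm (Wrd X) where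
  toFun := pXE
  map_one' := Equiv.ext fun u => Subtype.ext (pushX_one u.2)
  map_mul' x y := Equiv.ext fun u => Subtype.ext (pushX_mul x y u.2)

/-- The permutation of `Wrd X` given by left multiplication by a generator. -/
noncomputable def gE (c : Bool) : Equiv.Perm (Wrd X) where
  toFun u := ⟨pushG c true u.1, red_pushG c true u.2⟩
  invFun u := ⟨pushG c false u.1, red_pushG c false u.2⟩
  left_inv u := Subtype.ext <| by
    simpa using pushG_pushG (l := u.1) c false u.2
  right_inv u := Subtype.ext <| by
    simpa using pushG_pushG (l := u.1) c true u.2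

/-- The action of `D = X ∗ F(a, b)` on reduced words. -/
noncomputable def phi : Coprod X (FreeGroup Bool) →* Equiv.Perm (Wrd X) :=
  Coprod.lift phiX (FreeGroup.lift gE)

@[simp] lemma phi_inl_apply (x : X) (u : Wrd X) :
    (phi (Coprod.inl x) u).1 = pushX x u.1 := by
  rw [phi, Coprod.lift_apply_inl]; rfl

@[simp] lemma phi_dA : phi (X := X) (dA X) = gE false := by
  rw [phi, dA, Coprod.lift_apply_inr, FreeGroup.lift_apply_of]

@[simp] lemma phi_dB : phi (X := X) (dB X) = gE true := by
  rw [phi, dB, Coprod.lift_apply_inr, FreeGroup.lift_apply_of]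

@[simp] lemma gE_apply (c : Bool) (u : Wrd X) : (gE c u).1 = pushG c true u.1 := rfl

@[simp] lemma gE_inv_apply (c : Bool) (u : Wrd X) : ((gE c)⁻¹ u).1 = pushG c false u.1 := rfl

lemma rep_snoc {α : Type*} (n : ℕ) (a : α) (t : List α) :
    List.replicate n a ++ (a :: t) = List.replicate (n + 1) a ++ t := by
  rw [List.replicate_succ', List.append_assoc]; rfl

@[simp] lemma af_ne_ai : (af : Λ X) ≠ ai := by simp [af, ai]
@[simp] lemma bf_ne_ai : (bf : Λ X) ≠ ai := by simp [bf, ai]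
@[simp] lemma bi_ne_ai : (bi : Λ X) ≠ ai := by simp [bi, ai]

lemma gE_pow_apply (k : ℕ) :
    ∀ (m : ℕ) (z : List (Λ X)) (_hz : z.head? ≠ some ai) (u : Wrd X)
      (_hu : u.1 = List.replicate m ai ++ z),
    ((gE false ^ k) u).1 =
      if k ≤ m then List.replicate (m - k) ai ++ z else List.replicate (k - m) af ++ z := by
  induction k with
  | zero => intro m z hz u hu; simp [hu]
  | succ k ih =>
    intro m z hz u hu
    rw [pow_succ, Equiv.Perm.mul_apply]
    match m with
    | 0 =>
      have h1 : ((gE false) u).1 = af :: z := by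
        rw [gE_apply, hu, List.replicate_zero, List.nil_append, pushG_cons]
        · rfl
        · intro hc; apply hz; rw [hc]; rfl
      have h2 := ih 0 (af :: z) (by simp) ((gE false) u) (by simpa using h1)
      rw [h2]
      rcases Nat.eq_zero_or_pos k with hk | hk
      · subst hk; simp [List.replicate_succ]
      · rw [if_neg (by omega), if_neg (by omega)]
        simp only [Nat.sub_zero]
        rw [← rep_snoc]
    | m' + 1 =>
      have h1 : ((gE false) u).1 = List.replicate m' ai ++ z := by
        rw [gE_apply, hu, List.replicate_succ, List.cons_append]
        exact pushG_cancel false true _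
      have h2 := ih m' z hz ((gE false) u) h1
      rw [h2]
      by_cases hkm : k ≤ m'
      · rw [if_pos hkm, if_pos (by omega), show m' + 1 - (k + 1) = m' - k from by omega]
      · rw [if_neg hkm, if_neg (by omega), show k + 1 - (m' + 1) = k - m' from by omega]

lemma gE_inv_pow_apply (k : ℕ) (u : Wrd X) (h : u.1.head? ≠ some af) :
    (((gE false)⁻¹ ^ k) u).1 = List.replicate k ai ++ u.1 := by
  induction k generalizing u with
  | zero => simp
  | succ k ih =>
    rw [pow_succ, Equiv.Perm.mul_apply]
    have h1 : (((gE false)⁻¹) u).1 = ai :: u.1 := by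
      rw [gE_inv_apply, pushG_cons]
      · rfl
      · intro hc; apply h; rw [hc]; rfl
    have h2 := ih ((gE false)⁻¹ u) (by rw [h1]; simp [ai, af])
    rw [h2, h1, rep_snoc]

lemma exists_rep_decomp (l : List (Λ X)) :
    ∃ m z, l = List.replicate m ai ++ z ∧ z.head? ≠ some ai := by
  induction l with
  | nil => exact ⟨0, [], by simp⟩
  | cons h t ih =>
    by_cases hh : h = ai
    · obtain ⟨m, z, h1, h2⟩ := ih
      exact ⟨m + 1, z, by rw [List.replicate_succ, List.cons_append, hh, h1], h2⟩
    · exact ⟨0, h :: t, by simp, by simpa using hh⟩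

lemma rep_head_eq {α : Type*} {a : α} :
    ∀ {m n : ℕ} {l₁ l₂ : List α}, l₁.head? ≠ some a → l₂.head? ≠ some a →
      List.replicate m a ++ l₁ = List.replicate n a ++ l₂ → m = n ∧ l₁ = l₂ := by
  intro m
  induction m with
  | zero =>
    intro n l₁ l₂ h1 h2 heq
    match n with
    | 0 => simpa using heq
    | n + 1 =>
      exfalso
      rw [List.replicate_succ] at heq
      simp only [List.replicate_zero, List.nil_append, List.cons_append] at heq
      apply h1
      rw [heq]
      rfl
  | succ m ih =>
    intro n l₁ l₂ h1 h2 heq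
    match n with
    | 0 =>
      exfalso
      rw [List.replicate_succ] at heq
      simp only [List.replicate_zero, List.nil_append, List.cons_append] at heq
      apply h2
      rw [← heq]
      rfl
    | n + 1 =>
      rw [List.replicate_succ, List.replicate_succ, List.cons_append, List.cons_append,
        List.cons.injEq] at heq
      obtain ⟨h3, h4⟩ := ih h1 h2 heq.2
      exact ⟨by omega, h4⟩

/-! ### Single-step evaluation lemmas -/

lemma tau_apply (u : Wrd X) (h : u.1.head? ≠ some bi) : (gE true u).1 = bf :: u.1 := by
  rw [gE_apply, pushG_cons]
  · rfl
  · simpa [bi] using h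

lemma tau_inv_apply (u : Wrd X) (h : u.1.head? ≠ some bf) : ((gE true)⁻¹ u).1 = bi :: u.1 := by
  rw [gE_inv_apply, pushG_cons]
  · rfl
  · simpa [bf] using h

lemma sigma_apply (u : Wrd X) (h : u.1.head? ≠ some ai) : (gE false u).1 = af :: u.1 := by
  rw [gE_apply, pushG_cons]
  · rfl
  · simpa [ai] using h

lemma sigma_inv_apply (u : Wrd X) (h : u.1.head? ≠ some af) : ((gE false)⁻¹ u).1 = ai :: u.1 := by
  rw [gE_inv_apply, pushG_cons]
  · rfl
  · simpa [af] using h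

lemma tau_cancel (u : Wrd X) (t : List (Λ X)) (h : u.1 = bi :: t) : (gE true u).1 = t := by
  rw [gE_apply, h, bi]
  exact pushG_cancel true true t

lemma phi_inl_inv_apply (x : X) (u : Wrd X) :
    ((phi (Coprod.inl x))⁻¹ u).1 = pushX x⁻¹ u.1 := by
  rw [phi, Coprod.lift_apply_inl]; rfl

lemma pushx_apply (x : X) (hx : x ≠ 1) (u : Wrd X) (h : ∀ y : X, u.1.head? ≠ some (Sum.inl y)) :
    (phi (Coprod.inl x) u).1 = Sum.inl x :: u.1 := by
  rw [phi_inl_apply]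
  match hu : u.1 with
  | [] => simp [hx]
  | Sum.inl y :: t => exact absurd (by rw [hu]; rfl) (h y)
  | Sum.inr p :: t => simp [hx]

lemma head?_cases {α : Type*} {l : List α} {x : α} (h : l.head? = some x) : ∃ t, l = x :: t := by
  cases l with
  | nil => simp at h
  | cons a t =>
    simp only [List.head?_cons, Option.some.injEq] at h
    exact ⟨t, by rw [h]⟩

lemma sigma_pow_trichotomy (k : ℕ) (v : Wrd X) :
    (((gE false ^ k) v).1).head? = some ai ∨ (((gE false ^ k) v).1).head? = some af ∨
      (v.1 = List.replicate k ai ++ ((gE false ^ k) v).1 ∧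
        (((gE false ^ k) v).1).head? ≠ some ai) := by
  obtain ⟨m, z, hv, hz⟩ := exists_rep_decomp v.1
  have h := gE_pow_apply k m z hz v hv
  rcases lt_trichotomy m k with hmk | hmk | hmk
  · right; left
    rw [h, if_neg (by omega), show k - m = (k - m - 1) + 1 from by omega, List.replicate_succ]
    rfl
  · subst hmk
    right; right
    rw [h, if_pos le_rfl, Nat.sub_self, List.replicate_zero, List.nil_append]
    exact ⟨hv, hz⟩
  · left
    rw [h, if_pos (by omega), show m - k = (m - k - 1) + 1 from by omega, List.replicate_succ]
    rfl

/-! ### The ping-pong sets -/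

def XSet (n : ℕ) : Set (Wrd X) :=
  if n = 2 then {u | ∃ t, u.1 = ai :: ai :: bi :: af :: t}
  else {u | (∃ t, u.1 = List.replicate n ai ++ bf :: t) ∨
    (∃ (x : X) (t : List (Λ X)), u.1 = List.replicate n ai ++ Sum.inl x :: t)}

def YSet (n : ℕ) : Set (Wrd X) :=
  if n = 2 then {u | ∃ t, u.1 = ai :: ai :: bi :: ai :: t}
  else {u | ∃ t, u.1 = List.replicate n ai ++ bi :: t}

lemma mem_XSet_bf {n : ℕ} (hn : n ≠ 2) {u : Wrd X} {t}
    (h : u.1 = List.replicate n ai ++ bf :: t) : u ∈ XSet n := by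
  rw [XSet, if_neg hn]; exact Or.inl ⟨t, h⟩

lemma mem_XSet_inl {n : ℕ} (hn : n ≠ 2) {u : Wrd X} {x : X} {t}
    (h : u.1 = List.replicate n ai ++ Sum.inl x :: t) : u ∈ XSet n := by
  rw [XSet, if_neg hn]; exact Or.inr ⟨x, t, h⟩

lemma mem_XSet_two {u : Wrd X} {t} (h : u.1 = ai :: ai :: bi :: af :: t) : u ∈ XSet 2 := by
  rw [XSet, if_pos rfl]; exact ⟨t, h⟩

lemma mem_YSet {n : ℕ} (hn : n ≠ 2) {u : Wrd X} {t}
    (h : u.1 = List.replicate n ai ++ bi :: t) : u ∈ YSet n := by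
  rw [YSet, if_neg hn]; exact ⟨t, h⟩

lemma mem_YSet_two {u : Wrd X} {t} (h : u.1 = ai :: ai :: bi :: ai :: t) : u ∈ YSet 2 := by
  rw [YSet, if_pos rfl]; exact ⟨t, h⟩

lemma XSet_shape {n : ℕ} {u : Wrd X} (h : u ∈ XSet n) :
    ∃ h' t, u.1 = List.replicate n ai ++ h' :: t ∧ h' ≠ ai := by
  rw [XSet] at h
  split at h
  · obtain ⟨t, ht⟩ := h
    subst ‹n = 2›
    exact ⟨bi, af :: t, by simpa [List.replicate] using ht, bi_ne_ai⟩
  · rcases h with ⟨t, ht⟩ | ⟨x, t, ht⟩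
    · exact ⟨bf, t, ht, bf_ne_ai⟩
    · exact ⟨Sum.inl x, t, ht, by simp [ai]⟩

lemma YSet_shape {n : ℕ} {u : Wrd X} (h : u ∈ YSet n) :
    ∃ h' t, u.1 = List.replicate n ai ++ h' :: t ∧ h' ≠ ai := by
  rw [YSet] at h
  split at h
  · obtain ⟨t, ht⟩ := h
    subst ‹n = 2›
    exact ⟨bi, ai :: t, by simpa [List.replicate] using ht, bi_ne_ai⟩
  · obtain ⟨t, ht⟩ := h
    exact ⟨bi, t, ht, bi_ne_ai⟩

lemma shape_disj {m n : ℕ} {u : Wrd X} (hmn : m ≠ n)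
    (h₁ : ∃ h' t, u.1 = List.replicate m ai ++ h' :: t ∧ h' ≠ ai)
    (h₂ : ∃ h' t, u.1 = List.replicate n ai ++ h' :: t ∧ h' ≠ ai) : False := by
  obtain ⟨a₁, t₁, e₁, ne₁⟩ := h₁
  obtain ⟨a₂, t₂, e₂, ne₂⟩ := h₂
  have := rep_head_eq (a := ai) (l₁ := a₁ :: t₁) (l₂ := a₂ :: t₂)
    (by simpa using ne₁) (by simpa using ne₂) (e₁.symm.trans e₂)
  exact hmn this.1

lemma XY_same_disj {n : ℕ} {u : Wrd X} (h₁ : u ∈ XSet n) (h₂ : u ∈ YSet n) : False := by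
  rw [XSet] at h₁; rw [YSet] at h₂
  by_cases hn : n = 2
  · rw [if_pos hn] at h₁ h₂
    obtain ⟨t₁, e₁⟩ := h₁
    obtain ⟨t₂, e₂⟩ := h₂
    rw [e₁] at e₂
    simp only [List.cons.injEq] at e₂
    exact af_ne_ai e₂.2.2.2.1
  · rw [if_neg hn] at h₁ h₂
    obtain ⟨t₂, e₂⟩ := h₂
    rcases h₁ with ⟨t₁, e₁⟩ | ⟨x, t₁, e₁⟩
    · have := rep_head_eq (a := ai) (l₁ := bf :: t₁) (l₂ := bi :: t₂)
        (by simp) (by simp) (e₁.symm.trans e₂)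
      have h' := this.2
      simp only [List.cons.injEq] at h'
      exact absurd h'.1 (by simp [bf, bi])
    · have := rep_head_eq (a := ai) (l₁ := Sum.inl x :: t₁) (l₂ := bi :: t₂)
        (by simp [ai]) (by simp) (e₁.symm.trans e₂)
      have h' := this.2
      simp only [List.cons.injEq] at h'
      exact absurd h'.1 (by simp [bi])

/-! ### The ping-pong conditions -/

@[simp] lemma head_af_ne_ai (l : List (Λ X)) : (af :: l).head? ≠ some ai := by simp
@[simp] lemma head_af_ne_bi (l : List (Λ X)) : (af :: l).head? ≠ some bi := by
  simp [af, bi]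
@[simp] lemma head_af_ne_bf (l : List (Λ X)) : (af :: l).head? ≠ some bf := by
  simp [af, bf]
@[simp] lemma head_ai_ne_bi (l : List (Λ X)) : (ai :: l).head? ≠ some bi := by
  simp [ai, bi]
@[simp] lemma head_ai_ne_bf (l : List (Λ X)) : (ai :: l).head? ≠ some bf := by
  simp [ai, bf]
@[simp] lemma head_ai_ne_af (l : List (Λ X)) : (ai :: l).head? ≠ some af := by
  simp [ai, af]
@[simp] lemma head_bf_ne_ai (l : List (Λ X)) : (bf :: l).head? ≠ some ai := by simp
@[simp] lemma head_bf_ne_af (l : List (Λ X)) : (bf :: l).head? ≠ some af := by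
  simp [af, bf]
@[simp] lemma head_bf_ne_bi (l : List (Λ X)) : (bf :: l).head? ≠ some bi := by
  simp [bf, bi]
@[simp] lemma head_bi_ne_af (l : List (Λ X)) : (bi :: l).head? ≠ some af := by
  simp [af, bi]
@[simp] lemma head_bi_ne_bf (l : List (Λ X)) : (bi :: l).head? ≠ some bf := by
  simp [bf, bi]
@[simp] lemma head_inl_ne_ai (x : X) (l : List (Λ X)) :
    (Sum.inl x :: l).head? ≠ some ai := by simp [ai]
@[simp] lemma head_inl_ne_af (x : X) (l : List (Λ X)) :
    (Sum.inl x :: l).head? ≠ some af := by simp [af]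
@[simp] lemma head_inl_ne_bi (x : X) (l : List (Λ X)) :
    (Sum.inl x :: l).head? ≠ some bi := by simp [bi]
@[simp] lemma head_inl_ne_bf (x : X) (l : List (Λ X)) :
    (Sum.inl x :: l).head? ≠ some bf := by simp [bf]

lemma condA_gen (n : ℕ) (hn2 : n ≠ 2) (g' : X) (v : Wrd X) (hv : v ∉ YSet n) :
    ((gE false ^ n)⁻¹) (phi (Coprod.inl g') ((gE true) ((gE false ^ n) v))) ∈
      XSet (X := X) n := by
  set z₁ := (gE false ^ n) v with hz₁
  have hbi : z₁.1.head? ≠ some bi := by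
    rcases sigma_pow_trichotomy n v with hh | hh | ⟨hv1, _⟩
    · rw [← hz₁] at hh; rw [hh]; simp [ai, bi]
    · rw [← hz₁] at hh; rw [hh]; simp [af, bi]
    · intro hc
      obtain ⟨t, ht⟩ := head?_cases hc
      exact hv (mem_YSet hn2 (by rw [hv1, ← hz₁, ht]))
  have h2 : ((gE true) z₁).1 = bf :: z₁.1 := tau_apply _ hbi
  have h3 : (phi (Coprod.inl g') ((gE true) z₁)).1 = pushX g' (bf :: z₁.1) := by
    rw [phi_inl_apply, h2]
  rw [← inv_pow]
  by_cases hg : g' = 1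
  · have h3' : (phi (Coprod.inl g') ((gE true) z₁)).1 = bf :: z₁.1 := by
      rw [h3, bf, pushX_inr, if_pos hg]
    refine mem_XSet_bf hn2 (t := z₁.1) ?_
    rw [gE_inv_pow_apply n _ (by rw [h3']; simp [af,bf,ai,bi]), h3']
  · have h3' : (phi (Coprod.inl g') ((gE true) z₁)).1 = Sum.inl g' :: bf :: z₁.1 := by
      rw [h3, bf, pushX_inr, if_neg hg]
    refine mem_XSet_inl hn2 (x := g') (t := bf :: z₁.1) ?_
    rw [gE_inv_pow_apply n _ (by rw [h3']; simp [af,bf,ai,bi]), h3']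

lemma condB_gen (n : ℕ) (hn2 : n ≠ 2) (g' : X) (v : Wrd X) (hv : v ∉ XSet n) :
    ((gE false ^ n)⁻¹) ((gE true)⁻¹ (phi (Coprod.inl g'⁻¹) ((gE false ^ n) v))) ∈
      YSet (X := X) n := by
  set z₁ := (gE false ^ n) v with hz₁
  have hinl : ∀ y : X, z₁.1.head? ≠ some (Sum.inl y) := by
    intro y
    rcases sigma_pow_trichotomy n v with hh | hh | ⟨hv1, _⟩
    · rw [← hz₁] at hh; rw [hh]; simp [ai]
    · rw [← hz₁] at hh; rw [hh]; simp [af]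
    · intro hc
      obtain ⟨t, ht⟩ := head?_cases hc
      exact hv (mem_XSet_inl hn2 (by rw [hv1, ← hz₁, ht]))
  have hbf : z₁.1.head? ≠ some bf := by
    rcases sigma_pow_trichotomy n v with hh | hh | ⟨hv1, _⟩
    · rw [← hz₁] at hh; rw [hh]; simp [ai, bf]
    · rw [← hz₁] at hh; rw [hh]; simp [af, bf]
    · intro hc
      obtain ⟨t, ht⟩ := head?_cases hc
      exact hv (mem_XSet_bf hn2 (by rw [hv1, ← hz₁, ht]))
  rw [← inv_pow]
  by_cases hg : g' = 1
  · have h1 : (phi (Coprod.inl g'⁻¹) z₁) = z₁ := by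
      rw [hg, inv_one, map_one]; rfl
    have h2 : ((gE true)⁻¹ (phi (Coprod.inl g'⁻¹) z₁)).1 = bi :: z₁.1 := by
      rw [h1]; exact tau_inv_apply _ hbf
    refine mem_YSet hn2 (t := z₁.1) ?_
    rw [gE_inv_pow_apply n _ (by rw [h2]; simp [af,bf,ai,bi]), h2]
  · have h1 : (phi (Coprod.inl g'⁻¹) z₁).1 = Sum.inl g'⁻¹ :: z₁.1 :=
      pushx_apply _ (by simpa using hg) _ hinl
    have h2 : ((gE true)⁻¹ (phi (Coprod.inl g'⁻¹) z₁)).1 = bi :: Sum.inl g'⁻¹ :: z₁.1 := by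
      rw [tau_inv_apply _ (by rw [h1]; simp [af,bf,ai,bi]), h1]
    refine mem_YSet hn2 (t := Sum.inl g'⁻¹ :: z₁.1) ?_
    rw [gE_inv_pow_apply n _ (by rw [h2]; simp [af,bf,ai,bi]), h2]

lemma condA2 (v : Wrd X) (hv : v ∉ YSet 2) :
    ((gE false ^ 2)⁻¹) ((gE true)⁻¹ ((gE false) ((gE true) ((gE false ^ 2) v)))) ∈
      XSet (X := X) 2 := by
  set z₁ := (gE false ^ 2) v with hz₁
  rw [← inv_pow]
  by_cases hbi : z₁.1.head? = some bi
  · obtain ⟨t, ht⟩ := head?_cases hbi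
    have hv1 : v.1 = List.replicate 2 ai ++ z₁.1 := by
      rcases sigma_pow_trichotomy 2 v with hh | hh | ⟨hv1, _⟩
      · exact absurd (hbi.symm.trans hh) (by simp [ai, bi])
      · exact absurd (hbi.symm.trans hh) (by simp [af, bi])
      · exact hv1
    have htht : t.head? ≠ some ai := by
      intro hc
      obtain ⟨t', ht'⟩ := head?_cases hc
      refine hv (mem_YSet_two (t := t') ?_)
      rw [hv1, ht, ht']
      simp [List.replicate]
    have h2 : ((gE true) z₁).1 = t := tau_cancel _ _ ht
    have h3 : ((gE false) ((gE true) z₁)).1 = af :: t := by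
      rw [sigma_apply _ (by rw [h2]; exact htht), h2]
    have h4 : ((gE true)⁻¹ ((gE false) ((gE true) z₁))).1 = bi :: af :: t := by
      rw [tau_inv_apply _ (by rw [h3]; simp [af, bf, ai, bi]), h3]
    refine mem_XSet_two (t := t) ?_
    rw [gE_inv_pow_apply 2 _ (by rw [h4]; simp [af, bf, ai, bi]), h4]
    simp [List.replicate]
  · have h2 : ((gE true) z₁).1 = bf :: z₁.1 := tau_apply _ hbi
    have h3 : ((gE false) ((gE true) z₁)).1 = af :: bf :: z₁.1 := by
      rw [sigma_apply _ (by rw [h2]; simp [af, bf, ai, bi]), h2]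
    have h4 : ((gE true)⁻¹ ((gE false) ((gE true) z₁))).1 = bi :: af :: bf :: z₁.1 := by
      rw [tau_inv_apply _ (by rw [h3]; simp [af, bf, ai, bi]), h3]
    refine mem_XSet_two (t := bf :: z₁.1) ?_
    rw [gE_inv_pow_apply 2 _ (by rw [h4]; simp [af, bf, ai, bi]), h4]
    simp [List.replicate]

lemma condB2 (v : Wrd X) (hv : v ∉ XSet 2) :
    ((gE false ^ 2)⁻¹) ((gE true)⁻¹ ((gE false)⁻¹ ((gE true) ((gE false ^ 2) v)))) ∈
      YSet (X := X) 2 := by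
  set z₁ := (gE false ^ 2) v with hz₁
  rw [← inv_pow]
  by_cases hbi : z₁.1.head? = some bi
  · obtain ⟨t, ht⟩ := head?_cases hbi
    have hv1 : v.1 = List.replicate 2 ai ++ z₁.1 := by
      rcases sigma_pow_trichotomy 2 v with hh | hh | ⟨hv1, _⟩
      · exact absurd (hbi.symm.trans hh) (by simp [ai, bi])
      · exact absurd (hbi.symm.trans hh) (by simp [af, bi])
      · exact hv1
    have htht : t.head? ≠ some af := by
      intro hc
      obtain ⟨t', ht'⟩ := head?_cases hc
      refine hv (mem_XSet_two (t := t') ?_)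
      rw [hv1, ht, ht']
      simp [List.replicate]
    have h2 : ((gE true) z₁).1 = t := tau_cancel _ _ ht
    have h3 : (((gE false)⁻¹) ((gE true) z₁)).1 = ai :: t := by
      rw [sigma_inv_apply _ (by rw [h2]; exact htht), h2]
    have h4 : ((gE true)⁻¹ (((gE false)⁻¹) ((gE true) z₁))).1 = bi :: ai :: t := by
      rw [tau_inv_apply _ (by rw [h3]; simp [af, bf, ai, bi]), h3]
    refine mem_YSet_two (t := t) ?_
    rw [gE_inv_pow_apply 2 _ (by rw [h4]; simp [af, bf, ai, bi]), h4]
    simp [List.replicate]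
  · have h2 : ((gE true) z₁).1 = bf :: z₁.1 := tau_apply _ hbi
    have h3 : (((gE false)⁻¹) ((gE true) z₁)).1 = ai :: bf :: z₁.1 := by
      rw [sigma_inv_apply _ (by rw [h2]; simp [af, bf, ai, bi]), h2]
    have h4 : ((gE true)⁻¹ (((gE false)⁻¹) ((gE true) z₁))).1 = bi :: ai :: bf :: z₁.1 := by
      rw [tau_inv_apply _ (by rw [h3]; simp [af, bf, ai, bi]), h3]
    refine mem_YSet_two (t := bf :: z₁.1) ?_
    rw [gE_inv_pow_apply 2 _ (by rw [h4]; simp [af, bf, ai, bi]), h4]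
    simp [List.replicate]

lemma condA3 (w : X) (hw : w ≠ 1) (v : Wrd X) (hv : v ∉ YSet 3) :
    ((gE false ^ 3)⁻¹) ((phi (Coprod.inl w))⁻¹ ((gE true)⁻¹
      (phi (Coprod.inl w) ((gE true) ((gE false ^ 3) v))))) ∈ XSet (X := X) 3 := by
  set z₁ := (gE false ^ 3) v with hz₁
  have hbi : z₁.1.head? ≠ some bi := by
    rcases sigma_pow_trichotomy 3 v with hh | hh | ⟨hv1, _⟩
    · rw [hh]; simp [ai, bi]
    · rw [hh]; simp [af, bi]
    · intro hc
      obtain ⟨t, ht⟩ := head?_cases hc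
      exact hv (mem_YSet (by omega) (by rw [hv1, ht]))
  have h2 : ((gE true) z₁).1 = bf :: z₁.1 := tau_apply _ hbi
  have h3 : (phi (Coprod.inl w) ((gE true) z₁)).1 = Sum.inl w :: bf :: z₁.1 := by
    rw [pushx_apply w hw _ (by rw [h2]; simp [af, bf, ai, bi]), h2]
  have h4 : ((gE true)⁻¹ (phi (Coprod.inl w) ((gE true) z₁))).1 =
      bi :: Sum.inl w :: bf :: z₁.1 := by
    rw [tau_inv_apply _ (by rw [h3]; simp [af, bf, ai, bi]), h3]
  have h5 : ((phi (Coprod.inl w))⁻¹ ((gE true)⁻¹ (phi (Coprod.inl w) ((gE true) z₁)))).1 =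
      Sum.inl w⁻¹ :: bi :: Sum.inl w :: bf :: z₁.1 := by
    rw [phi_inl_inv_apply, h4, bi, pushX_inr, if_neg (by simpa using hw)]
  rw [← inv_pow]
  refine mem_XSet_inl (by omega) (x := w⁻¹) (t := bi :: Sum.inl w :: bf :: z₁.1) ?_
  rw [gE_inv_pow_apply 3 _ (by rw [h5]; simp [af, bf, ai, bi]), h5]

lemma condB3 (w : X) (hw : w ≠ 1) (v : Wrd X) (hv : v ∉ XSet 3) :
    ((gE false ^ 3)⁻¹) ((gE true)⁻¹ ((phi (Coprod.inl w))⁻¹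
      ((gE true) (phi (Coprod.inl w) ((gE false ^ 3) v))))) ∈ YSet (X := X) 3 := by
  set z₁ := (gE false ^ 3) v with hz₁
  have hinl : ∀ y : X, z₁.1.head? ≠ some (Sum.inl y) := by
    intro y
    rcases sigma_pow_trichotomy 3 v with hh | hh | ⟨hv1, _⟩
    · rw [hh]; simp [ai]
    · rw [hh]; simp [af]
    · intro hc
      obtain ⟨t, ht⟩ := head?_cases hc
      exact hv (mem_XSet_inl (by omega) (by rw [hv1, ht]))
  have h2 : (phi (Coprod.inl w) z₁).1 = Sum.inl w :: z₁.1 := pushx_apply w hw _ hinl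
  have h3 : ((gE true) (phi (Coprod.inl w) z₁)).1 = bf :: Sum.inl w :: z₁.1 := by
    rw [tau_apply _ (by rw [h2]; simp [af, bf, ai, bi]), h2]
  have h4 : ((phi (Coprod.inl w))⁻¹ ((gE true) (phi (Coprod.inl w) z₁))).1 =
      Sum.inl w⁻¹ :: bf :: Sum.inl w :: z₁.1 := by
    rw [phi_inl_inv_apply, h3, bf, pushX_inr, if_neg (by simpa using hw)]
  have h5 : ((gE true)⁻¹ ((phi (Coprod.inl w))⁻¹ ((gE true) (phi (Coprod.inl w) z₁)))).1 =
      bi :: Sum.inl w⁻¹ :: bf :: Sum.inl w :: z₁.1 := by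
    rw [tau_inv_apply _ (by rw [h4]; simp [af, bf, ai, bi]), h4]
  rw [← inv_pow]
  refine mem_YSet (by omega) (t := Sum.inl w⁻¹ :: bf :: Sum.inl w :: z₁.1) ?_
  rw [gE_inv_pow_apply 3 _ (by rw [h5]; simp [af, bf, ai, bi]), h5]

/-! ### Unfolding `dGen` -/

variable {r : ℕ}

lemma dGen_zero (g : Fin r → X) (w : X) (h : 0 < r + 4) : dGen g w ⟨0, h⟩ = dB X := rfl

lemma dGen_one (g : Fin r → X) (w : X) (h : 1 < r + 4) :
    dGen g w ⟨1, h⟩ = (dA X)⁻¹ * dB X * dA X := rfl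

lemma dGen_two (g : Fin r → X) (w : X) (h : 2 < r + 4) :
    dGen g w ⟨2, h⟩ = (dA X ^ 2)⁻¹ * (dB X)⁻¹ * dA X * dB X * dA X ^ 2 := rfl

lemma dGen_three (g : Fin r → X) (w : X) (h : 3 < r + 4) :
    dGen g w ⟨3, h⟩ =
      (dA X ^ 3)⁻¹ * ((Coprod.inl w)⁻¹ * (dB X)⁻¹ * Coprod.inl w * dB X) * dA X ^ 3 := rfl

lemma dGen_ge (g : Fin r → X) (w : X) (j : ℕ) (h : j + 4 < r + 4) (hj : j < r) :
    dGen g w ⟨j + 4, h⟩ =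
      (dA X ^ (j + 4))⁻¹ * Coprod.inl (g ⟨j, hj⟩) * dB X * dA X ^ (j + 4) := by
  rw [dGen, dif_neg (by simp)]
  congr 1

/-! ### The two ping-pong hypotheses -/

lemma condA (g : Fin r → X) (w : X) (hw : w ≠ 1) (i : Fin (r + 4)) (v : Wrd X)
    (hv : v ∉ YSet (X := X) (i : ℕ)) : phi (dGen g w i) v ∈ XSet (X := X) (i : ℕ) := by
  obtain ⟨n, hn⟩ := i
  rcases n with _ | _ | _ | _ | j
  · rw [dGen_zero, phi_dB]
    simpa using condA_gen 0 (by omega) 1 v hv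
  · rw [dGen_one]
    simp only [map_mul, map_inv, phi_dA, phi_dB, Equiv.Perm.mul_apply]
    simpa using condA_gen 1 (by omega) 1 v hv
  · rw [dGen_two]
    simp only [map_mul, map_inv, map_pow, phi_dA, phi_dB, Equiv.Perm.mul_apply]
    exact condA2 v hv
  · rw [dGen_three]
    simp only [map_mul, map_inv, map_pow, phi_dA, phi_dB, Equiv.Perm.mul_apply]
    exact condA3 w hw v hv
  · rw [dGen_ge g w j hn (by omega)]
    simp only [map_mul, map_inv, map_pow, phi_dA, phi_dB, Equiv.Perm.mul_apply]
    exact condA_gen (j + 4) (by omega) _ v hv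

lemma condB (g : Fin r → X) (w : X) (hw : w ≠ 1) (i : Fin (r + 4)) (v : Wrd X)
    (hv : v ∉ XSet (X := X) (i : ℕ)) : (phi (dGen g w i))⁻¹ v ∈ YSet (X := X) (i : ℕ) := by
  obtain ⟨n, hn⟩ := i
  rcases n with _ | _ | _ | _ | j
  · rw [dGen_zero, phi_dB]
    simpa using condB_gen 0 (by omega) 1 v hv
  · rw [dGen_one]
    simp only [map_mul, map_inv, mul_inv_rev, inv_inv, phi_dA, phi_dB, Equiv.Perm.mul_apply]
    simpa using condB_gen 1 (by omega) 1 v hv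
  · rw [dGen_two]
    simp only [map_mul, map_inv, map_pow, mul_inv_rev, inv_inv, phi_dA, phi_dB,
      Equiv.Perm.mul_apply]
    exact condB2 v hv
  · rw [dGen_three]
    simp only [map_mul, map_inv, map_pow, mul_inv_rev, inv_inv, phi_dA, phi_dB,
      Equiv.Perm.mul_apply]
    exact condB3 w hw v hv
  · rw [dGen_ge g w j hn (by omega)]
    simp only [map_mul, map_inv, map_pow, mul_inv_rev, inv_inv, phi_dA, phi_dB,
      Equiv.Perm.mul_apply]
    exact condB_gen (j + 4) (by omega) _ v hv

end PP17

open PP17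

/-- In the free product `D = X ∗ F(a,b)` of `X` with the free group on
two generators `a, b`, the `r + 4` elements `b`, `a⁻¹ba`, `a⁻²b⁻¹aba²`, `a⁻³[w,b]a³`, and
`a^{-(3+j)} gⱼ b a^{3+j}` for `j = 1, …, r` freely generate a free subgroup of rank
`r + 4`: the homomorphism from the free group of rank `r + 4` sending the `i`-th basis
element to the `i`-th listed element is injective. -/
theorem freeProduct_elements_freely_generate
    (X : Type) [Group X] (r : ℕ) (hr : 1 ≤ r) (g : Fin r → X) (w : X) (hw : w ≠ 1) :
    Function.Injective ⇑(FreeGroup.lift (dGen g w)) := by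
  classical
  haveI : Nontrivial (Fin (r + 4)) :=
    ⟨⟨⟨0, by omega⟩, ⟨1, by omega⟩, by simp [Fin.ext_iff]⟩⟩
  have hempty : ∀ n : ℕ, (⟨[], Red.nil⟩ : Wrd X) ∉ YSet (X := X) n := by
    intro n hmem
    obtain ⟨h', t, e, -⟩ := YSet_shape hmem
    have := congrArg List.length e
    simp at this
  have key : Function.Injective ⇑(FreeGroup.lift fun i : Fin (r + 4) => phi (dGen g w i)) := by
    apply FreeGroup.injective_lift_of_ping_pong (fun i : Fin (r + 4) => phi (dGen g w i))
      (fun i : Fin (r + 4) => XSet (X := X) (i : ℕ))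
      (fun i : Fin (r + 4) => YSet (X := X) (i : ℕ))
    · -- nonempty
      intro i
      exact ⟨phi (dGen g w i) ⟨[], Red.nil⟩, condA g w hw i _ (hempty _)⟩
    · -- X pairwise disjoint
      intro i j hij
      rw [Function.onFun, Set.disjoint_left]
      intro u h1 h2
      exact shape_disj (fun h => hij (Fin.ext h)) (XSet_shape h1) (XSet_shape h2)
    · -- Y pairwise disjoint
      intro i j hij
      rw [Function.onFun, Set.disjoint_left]
      intro u h1 h2
      exact shape_disj (fun h => hij (Fin.ext h)) (YSet_shape h1) (YSet_shape h2)
    · -- X vs Y disjoint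
      intro i j
      rw [Set.disjoint_left]
      intro u h1 h2
      by_cases hij : (i : ℕ) = (j : ℕ)
      · rw [← hij] at h2
        exact XY_same_disj h1 h2
      · exact shape_disj hij (XSet_shape h1) (YSet_shape h2)
    · -- a i • (Y i)ᶜ ⊆ X i
      intro i
      rintro u ⟨v, hv, rfl⟩
      simp only [Equiv.Perm.smul_def]
      exact condA g w hw i v hv
    · -- (a i)⁻¹ • (X i)ᶜ ⊆ Y i
      intro i
      rintro u ⟨v, hv, rfl⟩
      simp only [Pi.inv_apply, Equiv.Perm.smul_def]
      exact condB g w hw i v hv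
  have hcomp : (phi (X := X)).comp (FreeGroup.lift (dGen g w)) =
      FreeGroup.lift fun i : Fin (r + 4) => phi (dGen g w i) := by
    ext i
    simp
  intro u v huv
  apply key
  have h2 : ∀ y, (FreeGroup.lift fun i : Fin (r + 4) => phi (dGen g w i)) y =
      phi ((FreeGroup.lift (dGen g w)) y) := by
    intro y
    rw [← hcomp, MonoidHom.comp_apply]
  rw [h2, h2, huv]
end

section
/- Suppose λ₁ and λ₂ are nonzero real numbers such that for i = 1, 2 there is a subfield K_i of ℝ containing F₀ with [K_i : F₀] ≤ 2 such that λ_i is an S-unit of K_i, and such that λ₁λ₂ is an S-unit of some subfield K₃ of ℝ containing F₀ with [K₃ : F₀] ≤ 2. If neither λ₁² nor λ₂² is a unit of L (i.e., neither λ₁ nor λ₂ is a square root of a unit of the S-integers of ℚ(√2)), then λ₁ and λ₂ generate the same extension of F₀: F₀(λ₁) = F₀(λ₂) as subfields of ℝ. -/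
/-- `F₀ = ℚ(√2)`, regarded as a subfield of `ℝ`: the smallest subfield of `ℝ`
containing `√2`. -/
noncomputable def F0 : Subfield ℝ := Subfield.closure {Real.sqrt 2}

/-- `L = ℤ[√2, 1/5, 1/13]`, the subring of `ℝ` generated by `√2`, `1/5` and `1/13`
(the ring of `S`-integers of `ℚ(√2)` for `S = {5, 13}`). -/
noncomputable def Lring : Subring ℝ := Subring.closure {Real.sqrt 2, (5 : ℝ)⁻¹, (13 : ℝ)⁻¹}

/-- `K` is a subfield of `ℝ` containing `F₀` with `[K : F₀] ≤ 2`. -/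
noncomputable def QuadOver (F K : Subfield ℝ) : Prop :=
  ∃ h : F ≤ K,
    letI : Algebra ↥F ↥K := (Subfield.inclusion h).toAlgebra
    letI : Module ↥F ↥K := Algebra.toModule
    Module.rank ↥F ↥K ≤ 2

/-- `λ` is an `S`-unit of a subfield `K` of `ℝ`: `λ` is a unit of the integral closure
of `L` in `K`, i.e. both `λ` and `λ⁻¹` lie in `K` and are integral over `L`. -/
noncomputable def IsSUnit (K : Subfield ℝ) (lam : ℝ) : Prop :=
  (lam ∈ K ∧ IsIntegral ↥Lring lam) ∧ (lam⁻¹ ∈ K ∧ IsIntegral ↥Lring lam⁻¹)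

/-- `F(x)`: the subfield of `ℝ` generated by the subfield `F` together with `x`. -/
noncomputable def adjoinReal (F : Subfield ℝ) (x : ℝ) : Subfield ℝ :=
  F ⊔ Subfield.closure {x}

lemma rt2_sq : Real.sqrt 2 * Real.sqrt 2 = 2 := Real.mul_self_sqrt (by norm_num)

lemma base (p q : ℚ) (h : (p:ℝ) + q * Real.sqrt 2 = 0) : p = 0 ∧ q = 0 := by
  by_cases hq : q = 0
  · subst hq; simp at h; exact ⟨by exact_mod_cast h, rfl⟩
  · exfalso
    have : Real.sqrt 2 = ((-p/q : ℚ) : ℝ) := by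
      push_cast
      field_simp
      nlinarith [h]
    exact irrational_sqrt_two ⟨_, this.symm⟩

noncomputable def F0' : Subfield ℝ where
  carrier := {x | ∃ p q : ℚ, x = (p:ℝ) + q * Real.sqrt 2}
  zero_mem' := ⟨0, 0, by norm_num⟩
  one_mem' := ⟨1, 0, by norm_num⟩
  add_mem' := by
    rintro x y ⟨p, q, rfl⟩ ⟨r, s, rfl⟩
    exact ⟨p + r, q + s, by push_cast; ring⟩
  neg_mem' := by
    rintro x ⟨p, q, rfl⟩
    exact ⟨-p, -q, by push_cast; ring⟩
  mul_mem' := by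
    rintro x y ⟨p, q, rfl⟩ ⟨r, s, rfl⟩
    refine ⟨p*r + 2*q*s, p*s + q*r, ?_⟩
    push_cast
    linear_combination ((q:ℝ)*(s:ℝ)) * rt2_sq
  inv_mem' := by
    rintro x ⟨p, q, rfl⟩
    by_cases hx : (p:ℝ) + q * Real.sqrt 2 = 0
    · rw [hx]; exact ⟨0, 0, by norm_num⟩
    · have hne : ((p:ℝ))^2 - 2*(q:ℝ)^2 ≠ 0 := by
        intro h0
        have hz : ((p:ℝ) + q * Real.sqrt 2) * ((p:ℝ) - q * Real.sqrt 2) = 0 := by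
          linear_combination h0 - (q:ℝ)^2 * rt2_sq
        rcases mul_eq_zero.mp hz with h' | h'
        · exact hx h'
        · obtain ⟨hp, hq⟩ := base p (-q) (by push_cast; linarith)
          apply hx
          have : (q:ℝ) = 0 := by exact_mod_cast (by linarith [hq] : q = 0)
          rw [this]
          simpa [this] using (by exact_mod_cast hp : (p:ℝ) = 0)
      refine ⟨p/(p^2-2*q^2), -q/(p^2-2*q^2), ?_⟩
      refine inv_eq_of_mul_eq_one_right ?_
      push_cast
      field_simp
      linear_combination (-(q:ℝ)^2 * (((p:ℝ))^2 - 2*(q:ℝ)^2)⁻¹) * rt2_sq + mul_inv_cancel₀ hne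

lemma mem_F0_iff (x : ℝ) : x ∈ F0 ↔ ∃ p q : ℚ, x = (p:ℝ) + q * Real.sqrt 2 := by
  constructor
  · intro hx
    have : F0 ≤ F0' := Subfield.closure_le.mpr (by
      intro y hy
      rcases hy with rfl
      exact ⟨0, 1, by norm_num⟩)
    exact this hx
  · rintro ⟨p, q, rfl⟩
    exact Subfield.add_mem _ (SubfieldClass.ratCast_mem F0 p)
      (Subfield.mul_mem _ (SubfieldClass.ratCast_mem F0 q) (Subfield.subset_closure rfl))

noncomputable def L' : Subring ℝ where
  carrier := {x | ∃ (a b : ℤ) (n : ℕ), x = ((a:ℝ) + b * Real.sqrt 2) / 65^n}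
  zero_mem' := ⟨0, 0, 0, by norm_num⟩
  one_mem' := ⟨1, 0, 0, by norm_num⟩
  add_mem' := by
    rintro x y ⟨a, b, n, rfl⟩ ⟨c, d, m, rfl⟩
    refine ⟨a * 65^m + c * 65^n, b * 65^m + d * 65^n, n + m, ?_⟩
    have h1 : (65:ℝ)^n ≠ 0 := by positivity
    have h2 : (65:ℝ)^m ≠ 0 := by positivity
    push_cast
    field_simp
    ring
  neg_mem' := by
    rintro x ⟨a, b, n, rfl⟩
    exact ⟨-a, -b, n, by push_cast; ring⟩
  mul_mem' := by
    rintro x y ⟨a, b, n, rfl⟩ ⟨c, d, m, rfl⟩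
    refine ⟨a*c + 2*b*d, a*d + b*c, n + m, ?_⟩
    have h1 : (65:ℝ)^n ≠ 0 := by positivity
    have h2 : (65:ℝ)^m ≠ 0 := by positivity
    push_cast
    field_simp
    linear_combination ((b:ℝ)*d*65^n*65^m) * rt2_sq

lemma mem_L_iff (x : ℝ) :
    x ∈ Lring ↔ ∃ (a b : ℤ) (n : ℕ), x = ((a:ℝ) + b * Real.sqrt 2) / 65^n := by
  constructor
  · intro hx
    have : Lring ≤ L' := Subring.closure_le.mpr (by
      intro y hy
      rcases hy with rfl | rfl | rfl
      · exact ⟨0, 1, 0, by norm_num⟩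
      · exact ⟨13, 0, 1, by norm_num⟩
      · exact ⟨5, 0, 1, by norm_num⟩)
    exact this hx
  · rintro ⟨a, b, n, rfl⟩
    have h5 : (5:ℝ)⁻¹ ∈ Lring := Subring.subset_closure (by norm_num)
    have h13 : (13:ℝ)⁻¹ ∈ Lring := Subring.subset_closure (by norm_num)
    have hrt : Real.sqrt 2 ∈ Lring := Subring.subset_closure (by norm_num)
    have h65 : ((65:ℝ)^n)⁻¹ ∈ Lring := by
      have : ((65:ℝ)^n)⁻¹ = ((5:ℝ)⁻¹ * (13:ℝ)⁻¹)^n := by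
        rw [← mul_inv, ← inv_pow]
        norm_num
      rw [this]
      exact Subring.pow_mem _ (Subring.mul_mem _ h5 h13) n
    have : ((a:ℝ) + b * Real.sqrt 2) / 65^n = ((a:ℝ) + b * Real.sqrt 2) * ((65:ℝ)^n)⁻¹ := by
      ring
    rw [this]
    exact Subring.mul_mem _
      (Subring.add_mem _ (intCast_mem Lring a)
        (Subring.mul_mem _ (intCast_mem Lring b) hrt)) h65

lemma sum_split (d : ℕ) (R S : ℕ → ℚ) 
    (h : ∑ i ∈ Finset.range d, ((R i : ℝ) + S i * Real.sqrt 2) = 0) :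
    (∑ i ∈ Finset.range d, R i = 0) ∧ (∑ i ∈ Finset.range d, S i = 0) := by
  have h' : ((∑ i ∈ Finset.range d, R i : ℚ) : ℝ) + ((∑ i ∈ Finset.range d, S i : ℚ) : ℝ) * Real.sqrt 2 = 0 := by
    push_cast
    rw [Finset.sum_mul] at *
    rw [← Finset.sum_add_distrib]
    exact h
  exact base _ _ h'

lemma int_rel {x : ℝ} (hx : IsIntegral ↥Lring x) :
    ∃ (d N : ℕ) (a b : ℕ → ℤ), a d = 65^N ∧ b d = 0 ∧
      ∑ i ∈ Finset.range (d+1), ((a i : ℝ) + (b i : ℝ) * Real.sqrt 2) * x^i = 0 := by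
  obtain ⟨f, hf, hev⟩ := hx
  set d := f.natDegree with hd
  have hev' : ∑ i ∈ Finset.range (d+1), ((f.coeff i : ℝ)) * x^i = 0 := by
    rw [Polynomial.eval₂_eq_sum_range] at hev
    convert hev using 2
    rfl
  have hrep : ∀ i, ∃ (a b : ℤ) (n : ℕ), ((f.coeff i : ℝ)) = ((a:ℝ) + b * Real.sqrt 2)/65^n :=
    fun i => (mem_L_iff _).mp (f.coeff i).2
  choose A B n hABn using hrep
  set N := ∑ i ∈ Finset.range (d+1), n i with hN
  have hnle : ∀ i ∈ Finset.range (d+1), n i ≤ N :=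
    fun i hi => Finset.single_le_sum (fun j _ => Nat.zero_le (n j)) hi
  refine ⟨d, N, fun i => A i * 65^(N - n i), fun i => B i * 65^(N - n i), ?_, ?_, ?_⟩
  all_goals {
    have hkey : ∀ i ∈ Finset.range (d+1),
        ((f.coeff i : ℝ)) = (((A i * 65^(N - n i) : ℤ) : ℝ) + ((B i * 65^(N - n i) : ℤ) : ℝ) * Real.sqrt 2)/65^N := by
      intro i hi
      rw [hABn i]
      have h65 : (65:ℝ)^(n i) * (65:ℝ)^(N - n i) = 65^N := by
        rw [← pow_add]
        congr 1
        have := hnle i hi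
        omega
      have h1 : (65:ℝ)^(n i) ≠ 0 := by positivity
      have h2 : (65:ℝ)^(N - n i) ≠ 0 := by positivity
      push_cast
      rw [← h65]
      field_simp
    have hlead : ((A d * 65^(N - n d) : ℤ)) = 65^N ∧ ((B d * 65^(N - n d) : ℤ)) = 0 := by
      have hc1 : f.coeff d = 1 := hf.coeff_natDegree
      have h1 : (1:ℝ) = (((A d * 65^(N - n d) : ℤ) : ℝ) + ((B d * 65^(N - n d) : ℤ) : ℝ) * Real.sqrt 2)/65^N := by
        have := hkey d (Finset.self_mem_range_succ d)
        rw [hc1] at this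
        simpa using this
      have h65 : (65:ℝ)^N ≠ 0 := by positivity
      rw [eq_div_iff h65] at h1
      have hb := base ((A d * 65^(N - n d) : ℤ) - 65^N : ℚ) ((B d * 65^(N - n d) : ℤ) : ℚ) (by push_cast; push_cast at h1; linarith)
      constructor
      · have := hb.1; exact_mod_cast (by linarith [this] : ((A d * 65^(N - n d) : ℤ) : ℚ) = 65^N)
      · exact_mod_cast hb.2
    first
    | exact hlead.1
    | exact hlead.2
    | {
      have hS : (∑ i ∈ Finset.range (d+1), (((A i * 65^(N - n i) : ℤ) : ℝ) + ((B i * 65^(N - n i) : ℤ) : ℝ) * Real.sqrt 2) * x^i) / 65^N = 0 := by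
        rw [Finset.sum_div, ← hev']
        apply Finset.sum_congr rfl
        intro i hi
        rw [hkey i hi]
        ring
      have h65 : (65:ℝ)^N ≠ 0 := by positivity
      exact (div_eq_zero_iff.mp hS).resolve_right h65
    }
  }

lemma pow_split (p q : ℚ) (i : ℕ) : ∃ P Q : ℚ,
    ((p:ℝ) + q * Real.sqrt 2)^i = (P:ℝ) + Q * Real.sqrt 2 ∧
    ((p:ℝ) - q * Real.sqrt 2)^i = (P:ℝ) - Q * Real.sqrt 2 := by
  induction i with
  | zero => exact ⟨1, 0, by norm_num, by norm_num⟩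
  | succ i ih =>
    obtain ⟨P, Q, h1, h2⟩ := ih
    refine ⟨P*p + 2*Q*q, P*q + Q*p, ?_, ?_⟩
    · rw [pow_succ, h1]
      push_cast
      linear_combination ((Q:ℝ)*(q:ℝ)) * rt2_sq
    · rw [pow_succ, h2]
      push_cast
      linear_combination ((Q:ℝ)*(q:ℝ)) * rt2_sq

lemma conj_integral (p q : ℚ) (h : IsIntegral ↥Lring ((p:ℝ) + q * Real.sqrt 2)) :
    IsIntegral ↥Lring ((p:ℝ) - q * Real.sqrt 2) := by
  obtain ⟨d, N, a, b, had, hbd, hsum⟩ := int_rel h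
  have hPQ := fun i => pow_split p q i
  choose P Q hPQ1 hPQ2 using hPQ
  set R : ℕ → ℚ := fun i => a i * P i + 2 * b i * Q i with hR
  set S : ℕ → ℚ := fun i => a i * Q i + b i * P i with hS
  have hterm : ∀ i ∈ Finset.range (d+1),
      ((a i : ℝ) + (b i : ℝ) * Real.sqrt 2) * ((p:ℝ) + q * Real.sqrt 2)^i
        = (R i : ℝ) + (S i : ℝ) * Real.sqrt 2 := by
    intro i _
    rw [hPQ1 i, hR, hS]
    push_cast
    linear_combination ((b i : ℝ)*(Q i : ℝ)) * rt2_sq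
  have hsum' : ∑ i ∈ Finset.range (d+1), ((R i : ℝ) + (S i : ℝ) * Real.sqrt 2) = 0 := by
    rw [← hsum]
    exact (Finset.sum_congr rfl hterm).symm
  obtain ⟨hR0, hS0⟩ := sum_split (d+1) R S hsum'
  set c : ℕ → ↥Lring := fun i =>
    ⟨((a i : ℝ) - (b i : ℝ) * Real.sqrt 2)/65^N,
      (mem_L_iff _).mpr ⟨a i, -b i, N, by push_cast; ring⟩⟩ with hc
  set g : Polynomial ↥Lring := ∑ i ∈ Finset.range (d+1), Polynomial.C (c i) * Polynomial.X^i with hg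
  have hcd : c d = 1 := by
    apply Subtype.ext
    show ((a d : ℝ) - (b d : ℝ) * Real.sqrt 2)/65^N = 1
    rw [had, hbd]
    push_cast
    norm_num
  have hmonic : g.Monic := by
    apply Polynomial.monic_of_natDegree_le_of_coeff_eq_one d
    · apply Polynomial.natDegree_sum_le_of_forall_le
      intro i hi
      exact le_trans (Polynomial.natDegree_C_mul_X_pow_le _ _) (by
        simpa using Nat.lt_succ_iff.mp (Finset.mem_range.mp hi))
    · rw [hg, Polynomial.finset_sum_coeff]
      have : ∀ i ∈ Finset.range (d+1), (Polynomial.C (c i) * Polynomial.X^i).coeff d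
          = if i = d then c i else 0 := by
        intro i _
        rw [Polynomial.coeff_C_mul, Polynomial.coeff_X_pow]
        by_cases hid : i = d
        · simp [hid]
        · simp [hid, Ne.symm hid]
      rw [Finset.sum_congr rfl this, Finset.sum_ite_eq' (Finset.range (d+1)) d c]
      simp [hcd]
  refine ⟨g, hmonic, ?_⟩
  have heval : Polynomial.eval₂ (algebraMap ↥Lring ℝ) ((p:ℝ) - q * Real.sqrt 2) g
      = ∑ i ∈ Finset.range (d+1), ((c i : ℝ)) * ((p:ℝ) - q * Real.sqrt 2)^i := by
    rw [hg]
    simp [Polynomial.eval₂_finset_sum, Polynomial.eval₂_mul, Polynomial.eval₂_C,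
      Polynomial.eval₂_X_pow]
    exact Finset.sum_congr rfl (fun i _ => rfl)
  rw [heval]
  have hterm2 : ∀ i ∈ Finset.range (d+1),
      ((c i : ℝ)) * ((p:ℝ) - q * Real.sqrt 2)^i = ((R i : ℝ) - (S i : ℝ) * Real.sqrt 2)/65^N := by
    intro i _
    show (((a i : ℝ) - (b i : ℝ) * Real.sqrt 2)/65^N) * ((p:ℝ) - q * Real.sqrt 2)^i = _
    rw [hPQ2 i, hR, hS]
    rw [div_mul_eq_mul_div]
    congr 1
    push_cast
    linear_combination ((b i : ℝ)*(Q i : ℝ)) * rt2_sq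
  rw [Finset.sum_congr rfl hterm2, ← Finset.sum_div]
  have : ∑ i ∈ Finset.range (d+1), ((R i : ℝ) - (S i : ℝ) * Real.sqrt 2)
      = ((∑ i ∈ Finset.range (d+1), R i : ℚ) : ℝ)
        - ((∑ i ∈ Finset.range (d+1), S i : ℚ) : ℝ) * Real.sqrt 2 := by
    push_cast
    rw [Finset.sum_sub_distrib, Finset.sum_mul]
  rw [this, hR0, hS0]
  norm_num

lemma den_div (r : ℚ) (v : ℤ) (N : ℕ) (hv : v = (r.den : ℤ)) (hdvd : v ∣ 65^N) :
    ∃ (k : ℤ) (n : ℕ), r = (k:ℚ)/65^n := by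
  obtain ⟨w, hw⟩ := hdvd
  refine ⟨r.num * w, N, ?_⟩
  have hrv : r * (v:ℚ) = (r.num:ℚ) := by
    rw [hv]
    push_cast
    exact_mod_cast Rat.mul_den_eq_num r
  have h65 : ((65:ℚ))^N = (v:ℚ) * w := by exact_mod_cast congrArg (Int.cast : ℤ → ℚ) hw
  have h650 : ((65:ℚ))^N ≠ 0 := by positivity
  rw [eq_div_iff h650, h65]
  push_cast
  linear_combination (w:ℚ) * hrv

lemma coprime_vu (r : ℚ) : IsCoprime ((r.den : ℤ)) r.num := by
  rw [Int.isCoprime_iff_gcd_eq_one, Int.gcd]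
  simp only [Int.natAbs_natCast]
  exact Nat.Coprime.symm r.reduced

lemma rat_integral (r : ℚ) (h : IsIntegral ↥Lring ((r:ℚ):ℝ)) :
    ∃ (k : ℤ) (n : ℕ), r = (k:ℚ)/65^n := by
  obtain ⟨d, N, a, b, had, hbd, hsum⟩ := int_rel h
  have hterm : ∀ i ∈ Finset.range (d+1),
      ((a i : ℝ) + (b i : ℝ) * Real.sqrt 2) * ((r:ℝ))^i
        = ((a i * r^i : ℚ) : ℝ) + ((b i * r^i : ℚ) : ℝ) * Real.sqrt 2 := by
    intro i _
    push_cast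
    ring
  have hsum' := sum_split (d+1) (fun i => a i * r^i) (fun i => b i * r^i)
    (by rw [← Finset.sum_congr rfl hterm]; exact hsum)
  have hQ : ∑ i ∈ Finset.range (d+1), (a i : ℚ) * r^i = 0 := hsum'.1
  set u : ℤ := r.num with hu
  set v : ℤ := (r.den : ℤ) with hv
  have hrv : r * (v:ℚ) = (u:ℚ) := by
    rw [hv, hu]
    push_cast
    exact_mod_cast Rat.mul_den_eq_num r
  have hE : ∑ i ∈ Finset.range (d+1), a i * u^i * v^(d-i) = 0 := by
    apply Int.cast_injective (α := ℚ)
    push_cast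
    have hc : ∀ i ∈ Finset.range (d+1),
        (a i : ℚ) * (u:ℚ)^i * (v:ℚ)^(d-i) = ((a i : ℚ) * r^i) * (v:ℚ)^d := by
      intro i hi
      have hile : i ≤ d := Nat.lt_succ_iff.mp (Finset.mem_range.mp hi)
      have hvd : (v:ℚ)^d = (v:ℚ)^i * (v:ℚ)^(d-i) := by
        rw [← pow_add]
        congr 1
        omega
      rw [hvd, ← hrv]
      ring
    rw [Finset.sum_congr rfl hc, ← Finset.sum_mul, hQ, zero_mul]
  have hdvd : v ∣ 65^N * u^d := by
    have h2 := hE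
    rw [Finset.sum_range_succ, had] at h2
    simp only [Nat.sub_self, pow_zero, mul_one] at h2
    have hsplit : 65^N * u^d = -∑ i ∈ Finset.range d, a i * u^i * v^(d-i) := by linarith
    rw [hsplit]
    refine dvd_neg.mpr (Finset.dvd_sum ?_)
    intro i hi
    have hid : i < d := Finset.mem_range.mp hi
    have hvv : v^(d-i) = v * v^(d-i-1) := by
      rw [← pow_succ']
      congr 1
      omega
    rw [hvv]
    exact ⟨a i * u^i * v^(d-i-1), by ring⟩
  have hvd : v ∣ 65^N := ((coprime_vu r).pow_right (n := d)).dvd_of_dvd_mul_right hdvd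
  exact den_div r v N hv hvd

lemma sq_den (s : ℚ) (k : ℤ) (m : ℕ) (h : s^2 = (k:ℚ)/65^m) :
    ∃ (k' : ℤ) (n : ℕ), s = (k':ℚ)/65^n := by
  set u : ℤ := s.num with hu
  set v : ℤ := (s.den : ℤ) with hv
  have hrv : s * (v:ℚ) = (u:ℚ) := by
    rw [hv, hu]
    push_cast
    exact_mod_cast Rat.mul_den_eq_num s
  have h650 : ((65:ℚ))^m ≠ 0 := by positivity
  have hE : u^2 * 65^m = k * v^2 := by
    apply Int.cast_injective (α := ℚ)
    push_cast
    calc ((u:ℚ))^2 * 65^m = (s*(v:ℚ))^2 * 65^m := by rw [hrv]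
    _ = s^2 * 65^m * (v:ℚ)^2 := by ring
    _ = ((k:ℚ)/65^m) * 65^m * (v:ℚ)^2 := by rw [h]
    _ = (k:ℚ) * (v:ℚ)^2 := by field_simp
  have hdvd : v^2 ∣ 65^m * u^2 := ⟨k, by rw [mul_comm ((65:ℤ)^m) (u^2), hE]; ring⟩
  have hcop : IsCoprime (v^2) (u^2) := (coprime_vu s).pow
  have hv2 : v^2 ∣ 65^m := hcop.dvd_of_dvd_mul_right hdvd
  exact den_div s v m hv ((dvd_pow_self v two_ne_zero).trans hv2)

lemma zmod8_lemma : ∀ x y : ZMod 8, 2*x^2 = y^2 →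
    (ZMod.castHom (by norm_num : (2:ℕ) ∣ 8) (ZMod 2) x = 0 ∧
     ZMod.castHom (by norm_num : (4:ℕ) ∣ 8) (ZMod 4) y = 0) := by decide

lemma closed_arith (p q : ℚ)
    (h1 : ∃ (k : ℤ) (n : ℕ), 2*p = (k:ℚ)/65^n)
    (h2 : ∃ (k : ℤ) (n : ℕ), 4*q = (k:ℚ)/65^n)
    (h3 : ∃ (k : ℤ) (n : ℕ), p^2 - 2*q^2 = (k:ℚ)/65^n) :
    (∃ (k : ℤ) (n : ℕ), p = (k:ℚ)/65^n) ∧ (∃ (k : ℤ) (n : ℕ), q = (k:ℚ)/65^n) := by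
  obtain ⟨k1, n1, hk1⟩ := h1
  obtain ⟨k2, n2, hk2⟩ := h2
  obtain ⟨k3, n3, hk3⟩ := h3
  have e1 : (k1:ℚ) = 2*p*65^n1 := by
    rw [hk1]; field_simp
  have e2 : (k2:ℚ) = 4*q*65^n2 := by
    rw [hk2]; field_simp
  have e3 : (k3:ℚ) = (p^2-2*q^2)*65^n3 := by
    rw [hk3]; field_simp
  have E : 2*k1^2*65^(2*n2+n3) - k2^2*65^(2*n1+n3) = 8*k3*65^(2*n1+2*n2) := by
    apply Int.cast_injective (α := ℚ)
    push_cast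
    rw [e1, e2, e3]
    ring
  have hZ : 2*((k1:ZMod 8))^2 = ((k2:ZMod 8))^2 := by
    have h := congrArg (fun z : ℤ => (z : ZMod 8)) E
    push_cast at h
    rw [show ((65:ZMod 8)) = 1 from by decide, show ((8:ZMod 8)) = 0 from by decide] at h
    simp only [one_pow, mul_one, zero_mul] at h
    linear_combination h
  obtain ⟨hx2, hy4⟩ := zmod8_lemma (k1 : ZMod 8) (k2 : ZMod 8) hZ
  have hd2 : (2:ℤ) ∣ k1 := by
    have h0 : ((k1 : ZMod 2)) = 0 := by
      rw [← map_intCast (ZMod.castHom (by norm_num : (2:ℕ) ∣ 8) (ZMod 2)) k1]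
      exact hx2
    exact_mod_cast (ZMod.intCast_zmod_eq_zero_iff_dvd k1 2).mp h0
  have hd4 : (4:ℤ) ∣ k2 := by
    have h0 : ((k2 : ZMod 4)) = 0 := by
      rw [← map_intCast (ZMod.castHom (by norm_num : (4:ℕ) ∣ 8) (ZMod 4)) k2]
      exact hy4
    exact_mod_cast (ZMod.intCast_zmod_eq_zero_iff_dvd k2 4).mp h0
  obtain ⟨k1', hk1'⟩ := hd2
  obtain ⟨k2', hk2'⟩ := hd4
  constructor
  · refine ⟨k1', n1, ?_⟩
    have : 2*p = ((2*k1' : ℤ):ℚ)/65^n1 := by rw [← hk1']; exact hk1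
    push_cast at this
    have h650 : ((65:ℚ))^n1 ≠ 0 := by positivity
    field_simp at this ⊢
    linarith
  · refine ⟨k2', n2, ?_⟩
    have : 4*q = ((4*k2' : ℤ):ℚ)/65^n2 := by rw [← hk2']; exact hk2
    push_cast at this
    have h650 : ((65:ℚ))^n2 ≠ 0 := by positivity
    field_simp at this ⊢
    linarith

lemma integrally_closed (p q : ℚ) (hi : IsIntegral ↥Lring ((p:ℝ) + q * Real.sqrt 2)) :
    ((p:ℝ) + q * Real.sqrt 2) ∈ Lring := by
  set x := (p:ℝ) + q * Real.sqrt 2 with hx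
  set y := (p:ℝ) - q * Real.sqrt 2 with hy
  have hconj : IsIntegral ↥Lring y := conj_integral p q hi
  have h2p : IsIntegral ↥Lring (((2*p : ℚ):ℝ)) := by
    have : ((2*p : ℚ):ℝ) = x + y := by push_cast; ring
    rw [this]
    exact hi.add hconj
  have h8q : IsIntegral ↥Lring (((8*q^2 : ℚ):ℝ)) := by
    have : ((8*q^2 : ℚ):ℝ) = (x - y) * (x - y) := by
      push_cast
      rw [hx, hy]
      ring_nf
      linear_combination (-4*(q:ℝ)^2) * rt2_sq
    rw [this]
    exact (hi.sub hconj).mul (hi.sub hconj)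
  have hpq : IsIntegral ↥Lring (((p^2 - 2*q^2 : ℚ):ℝ)) := by
    have : ((p^2 - 2*q^2 : ℚ):ℝ) = x * y := by
      push_cast
      rw [hx, hy]
      ring_nf
      linear_combination ((q:ℝ)^2) * rt2_sq
    rw [this]
    exact hi.mul hconj
  have d1 := rat_integral (2*p) h2p
  have d2 := rat_integral (8*q^2) h8q
  have d3 := rat_integral (p^2 - 2*q^2) hpq
  have d2' : ∃ (k : ℤ) (n : ℕ), 4*q = (k:ℚ)/65^n := by
    obtain ⟨k, n, hk⟩ := d2
    refine sq_den (4*q) (2*k) n ?_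
    have : (4*q)^2 = 2*(8*q^2) := by ring
    rw [this, hk]
    push_cast
    ring
  obtain ⟨⟨kp, np, hkp⟩, ⟨kq, nq, hkq⟩⟩ := closed_arith p q d1 d2' d3
  refine (mem_L_iff x).mpr ⟨kp * 65^nq, kq * 65^np, np + nq, ?_⟩
  rw [hx, hkp, hkq]
  have h1 : ((65:ℝ))^np ≠ 0 := by positivity
  have h2 : ((65:ℝ))^nq ≠ 0 := by positivity
  push_cast
  rw [pow_add]
  field_simp

lemma F0_integral_mem {x : ℝ} (hxF : x ∈ F0) (hi : IsIntegral ↥Lring x) : x ∈ Lring := by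
  obtain ⟨p, q, rfl⟩ := (mem_F0_iff x).mp hxF
  exact integrally_closed p q hi

lemma sq_unit {lam : ℝ} (h2 : lam^2 ∈ F0) (hi : IsIntegral ↥Lring lam)
    (hi' : IsIntegral ↥Lring lam⁻¹) : lam^2 ∈ Lring ∧ (lam^2)⁻¹ ∈ Lring := by
  constructor
  · exact F0_integral_mem h2 (by rw [sq]; exact hi.mul hi)
  · refine F0_integral_mem (Subfield.inv_mem _ h2) ?_
    rw [sq, mul_inv]
    exact hi'.mul hi'

lemma not_in_F0 {lam : ℝ} (hns : ¬ (lam ^ 2 ∈ Lring ∧ (lam ^ 2)⁻¹ ∈ Lring))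
    (hi : IsIntegral ↥Lring lam) (hi' : IsIntegral ↥Lring lam⁻¹) : lam ∉ F0 := by
  intro hmem
  exact hns (sq_unit (by rw [sq]; exact Subfield.mul_mem _ hmem hmem) hi hi')

set_option synthInstance.maxHeartbeats 1000000 in
set_option maxHeartbeats 1000000 in
lemma quad_rel {K : Subfield ℝ} (hQ : QuadOver F0 K) {lam : ℝ} (hm : lam ∈ K)
    (hnot : lam ∉ F0) : ∃ a b : ℝ, a ∈ F0 ∧ b ∈ F0 ∧ lam^2 = a*lam + b := by
  obtain ⟨hle, hrank⟩ := hQ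
  letI : Algebra ↥F0 ↥K := (Subfield.inclusion hle).toAlgebra
  letI : Module ↥F0 ↥K := Algebra.toModule
  set v : Fin 3 → ↥K := ![1, ⟨lam, hm⟩, ⟨lam^2, pow_mem hm 2⟩] with hv
  have hli : ¬ LinearIndependent ↥F0 v := by
    intro hli
    have h3 := hli.cardinal_le_rank
    rw [Cardinal.mk_fintype] at h3
    simp only [Fintype.card_fin, Nat.cast_ofNat] at h3
    have hcon : (3:Cardinal) ≤ 2 := le_trans h3 hrank
    norm_num at hcon
  obtain ⟨g, hg0, i, hgi⟩ := Fintype.not_linearIndependent_iff.mp hli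
  rw [Fin.sum_univ_three] at hg0
  rw [Algebra.smul_def, Algebra.smul_def, Algebra.smul_def] at hg0
  have halg : ∀ c : ↥F0, ((algebraMap ↥F0 ↥K c : ↥K) : ℝ) = (c : ℝ) := fun c => rfl
  have h := congrArg Subtype.val hg0
  simp only [Subfield.coe_add, Subfield.coe_mul, hv] at h
  rw [halg, halg, halg] at h
  have hval : ((g 0 : ℝ)) + (g 1 : ℝ) * lam + (g 2 : ℝ) * lam^2 = 0 := by
    simpa using h
  clear h hg0
  by_cases hg2 : g 2 = 0
  · exfalso
    have hv2 : ((g 2 : ℝ)) = 0 := by rw [hg2]; rfl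
    by_cases hg1 : g 1 = 0
    · have hv1 : ((g 1 : ℝ)) = 0 := by rw [hg1]; rfl
      have hv0 : ((g 0 : ℝ)) = 0 := by
        rw [hv1, hv2] at hval
        linarith [hval]
      have hg0' : g 0 = 0 := Subtype.ext hv0
      fin_cases i <;> simp_all
    · apply hnot
      have hne : ((g 1 : ℝ)) ≠ 0 := fun h0 => hg1 (Subtype.ext h0)
      have hl : lam = (-(g 0 : ℝ)) / (g 1 : ℝ) := by
        rw [hv2] at hval
        field_simp
        linarith [hval]
      rw [hl]
      exact Subfield.div_mem _ (Subfield.neg_mem _ (g 0).2) (g 1).2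
  · have hne : ((g 2 : ℝ)) ≠ 0 := fun h0 => hg2 (Subtype.ext h0)
    refine ⟨(-(g 1 : ℝ))/(g 2 : ℝ), (-(g 0 : ℝ))/(g 2 : ℝ),
      Subfield.div_mem _ (Subfield.neg_mem _ (g 1).2) (g 2).2,
      Subfield.div_mem _ (Subfield.neg_mem _ (g 0).2) (g 2).2, ?_⟩
    field_simp
    linear_combination hval

set_option maxHeartbeats 1000000 in
noncomputable def quadSF (lam a b : ℝ) (hl : lam ∉ F0) (ha : a ∈ F0) (hb : b ∈ F0)
    (hrel : lam^2 = a*lam + b) : Subfield ℝ where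
  carrier := {x | ∃ c d : ℝ, c ∈ F0 ∧ d ∈ F0 ∧ x = c + d*lam}
  zero_mem' := ⟨0, 0, Subfield.zero_mem _, Subfield.zero_mem _, by ring⟩
  one_mem' := ⟨1, 0, Subfield.one_mem _, Subfield.zero_mem _, by ring⟩
  add_mem' := by
    rintro x y ⟨c, d, hc, hd, rfl⟩ ⟨e, f, he, hf, rfl⟩
    exact ⟨c + e, d + f, Subfield.add_mem _ hc he, Subfield.add_mem _ hd hf, by ring⟩
  neg_mem' := by
    rintro x ⟨c, d, hc, hd, rfl⟩
    exact ⟨-c, -d, Subfield.neg_mem _ hc, Subfield.neg_mem _ hd, by ring⟩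
  mul_mem' := by
    rintro x y ⟨c, d, hc, hd, rfl⟩ ⟨e, f, he, hf, rfl⟩
    refine ⟨c*e + d*f*b, c*f + d*e + d*f*a,
      Subfield.add_mem _ (Subfield.mul_mem _ hc he)
        (Subfield.mul_mem _ (Subfield.mul_mem _ hd hf) hb),
      Subfield.add_mem _ (Subfield.add_mem _ (Subfield.mul_mem _ hc hf)
        (Subfield.mul_mem _ hd he)) (Subfield.mul_mem _ (Subfield.mul_mem _ hd hf) ha), ?_⟩
    linear_combination (d*f) * hrel
  inv_mem' := by
    rintro x ⟨c, d, hc, hd, rfl⟩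
    by_cases hx : c + d*lam = 0
    · rw [hx]
      exact ⟨0, 0, Subfield.zero_mem _, Subfield.zero_mem _, by norm_num⟩
    · set e : ℝ := c*c + c*d*a - d*d*b with he
      have hfac : (c + d*lam) * (c + d*a - d*lam) = e := by
        rw [he]
        linear_combination (-(d^2)) * hrel
      have he0 : e ≠ 0 := by
        intro h0
        rw [h0] at hfac
        rcases mul_eq_zero.mp hfac with h' | h'
        · exact hx h'
        · by_cases hd0 : d = 0
          · apply hx
            rw [hd0] at h' ⊢
            simpa using h'
          · apply hl
            have : lam = (c + d*a)/d := by
              field_simp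
              linarith [h']
            rw [this]
            exact Subfield.div_mem _ (Subfield.add_mem _ hc (Subfield.mul_mem _ hd ha)) hd
      refine ⟨(c + d*a)/e, -d/e,
        Subfield.div_mem _ (Subfield.add_mem _ hc (Subfield.mul_mem _ hd ha))
          (Subfield.sub_mem _ (Subfield.add_mem _ (Subfield.mul_mem _ hc hc)
            (Subfield.mul_mem _ (Subfield.mul_mem _ hc hd) ha))
            (Subfield.mul_mem _ (Subfield.mul_mem _ hd hd) hb)),
        Subfield.div_mem _ (Subfield.neg_mem _ hd)
          (Subfield.sub_mem _ (Subfield.add_mem _ (Subfield.mul_mem _ hc hc)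
            (Subfield.mul_mem _ (Subfield.mul_mem _ hc hd) ha))
            (Subfield.mul_mem _ (Subfield.mul_mem _ hd hd) hb)), ?_⟩
      have : (c + d*lam)⁻¹ = (c + d*a - d*lam)/e := by
        rw [eq_div_iff he0, inv_mul_eq_div, div_eq_iff hx]
        linarith [hfac]
      rw [this]
      ring

set_option maxHeartbeats 1000000 in
lemma mem_adjoin_iff {lam a b : ℝ} (hl : lam ∉ F0) (ha : a ∈ F0) (hb : b ∈ F0)
    (hrel : lam^2 = a*lam + b) (x : ℝ) :
    x ∈ adjoinReal F0 lam ↔ ∃ c d : ℝ, c ∈ F0 ∧ d ∈ F0 ∧ x = c + d*lam := by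
  constructor
  · intro hx
    have hle : adjoinReal F0 lam ≤ quadSF lam a b hl ha hb hrel := by
      apply sup_le
      · intro y hy
        exact ⟨y, 0, hy, Subfield.zero_mem _, by ring⟩
      · rw [Subfield.closure_le]
        rintro y rfl
        exact ⟨0, 1, Subfield.zero_mem _, Subfield.one_mem _, by ring⟩
    exact hle hx
  · rintro ⟨c, d, hc, hd, rfl⟩
    have hcm : c ∈ adjoinReal F0 lam := (le_sup_left : F0 ≤ _) hc
    have hdm : d ∈ adjoinReal F0 lam := (le_sup_left : F0 ≤ _) hd
    have hlm : lam ∈ adjoinReal F0 lam :=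
      (le_sup_right : Subfield.closure {lam} ≤ _) (Subfield.subset_closure rfl)
    exact Subfield.add_mem _ hcm (Subfield.mul_mem _ hdm hlm)

lemma lam_mem_adjoin (lam : ℝ) : lam ∈ adjoinReal F0 lam :=
  (le_sup_right : Subfield.closure {lam} ≤ _) (Subfield.subset_closure rfl)

lemma F0_le_adjoin (lam : ℝ) : F0 ≤ adjoinReal F0 lam := le_sup_left

lemma adjoin_eq_of_mem {lam1 lam2 a b : ℝ} (hl1 : lam1 ∉ F0) (hl2 : lam2 ∉ F0)
    (ha : a ∈ F0) (hb : b ∈ F0) (hrel : lam1^2 = a*lam1 + b)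
    (hmem : lam2 ∈ adjoinReal F0 lam1) :
    adjoinReal F0 lam1 = adjoinReal F0 lam2 := by
  apply le_antisymm
  · obtain ⟨c, d, hc, hd, hcd⟩ := (mem_adjoin_iff hl1 ha hb hrel lam2).mp hmem
    have hd0 : d ≠ 0 := by
      intro h0
      apply hl2
      rw [h0] at hcd
      simp at hcd
      rw [hcd]
      exact hc
    have hlam1 : lam1 = (lam2 - c)/d := by
      rw [hcd]
      field_simp
      ring
    apply sup_le
    · exact F0_le_adjoin lam2
    · rw [Subfield.closure_le]
      rintro y rfl
      rw [hlam1]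
      exact Subfield.div_mem _
        (Subfield.sub_mem _ (lam_mem_adjoin lam2) ((F0_le_adjoin lam2) hc))
        ((F0_le_adjoin lam2) hd)
  · apply sup_le
    · exact F0_le_adjoin lam1
    · rw [Subfield.closure_le]
      rintro y rfl
      exact hmem

/-- Suppose `λ₁` and `λ₂` are nonzero real numbers such that for
`i = 1, 2` the number `λᵢ` is an `S`-unit of some subfield `Kᵢ` of `ℝ` containing `F₀`
with `[Kᵢ : F₀] ≤ 2`, and such that `λ₁λ₂` is an `S`-unit of some subfield `K₃` of `ℝ`
containing `F₀` with `[K₃ : F₀] ≤ 2`. If neither `λ₁²` nor `λ₂²` is a unit of `L`, then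
`F₀(λ₁) = F₀(λ₂)` as subfields of `ℝ`. -/
theorem sunits_generate_same_quadratic_extension
    (lam1 lam2 : ℝ) (h1 : lam1 ≠ 0) (h2 : lam2 ≠ 0)
    (hK1 : ∃ K1 : Subfield ℝ, QuadOver F0 K1 ∧ IsSUnit K1 lam1)
    (hK2 : ∃ K2 : Subfield ℝ, QuadOver F0 K2 ∧ IsSUnit K2 lam2)
    (hK3 : ∃ K3 : Subfield ℝ, QuadOver F0 K3 ∧ IsSUnit K3 (lam1 * lam2))
    (hns1 : ¬ (lam1 ^ 2 ∈ Lring ∧ (lam1 ^ 2)⁻¹ ∈ Lring))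
    (hns2 : ¬ (lam2 ^ 2 ∈ Lring ∧ (lam2 ^ 2)⁻¹ ∈ Lring)) :
    adjoinReal F0 lam1 = adjoinReal F0 lam2 := by
  obtain ⟨K1, hQ1, ⟨hm1, hi1⟩, hm1', hi1'⟩ := hK1
  obtain ⟨K2, hQ2, ⟨hm2, hi2⟩, hm2', hi2'⟩ := hK2
  obtain ⟨K3, hQ3, ⟨hm3, hi3⟩, hm3', hi3'⟩ := hK3
  have hn1 : lam1 ∉ F0 := not_in_F0 hns1 hi1 hi1'
  have hn2 : lam2 ∉ F0 := not_in_F0 hns2 hi2 hi2'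
  obtain ⟨a1, b1, ha1, hb1, hrel1⟩ := quad_rel hQ1 hm1 hn1
  obtain ⟨a2, b2, ha2, hb2, hrel2⟩ := quad_rel hQ2 hm2 hn2
  by_cases hmu : lam1 * lam2 ∈ F0
  · apply adjoin_eq_of_mem hn1 hn2 ha1 hb1 hrel1
    have hl2 : lam2 = (lam1*lam2) * lam1⁻¹ := by
      rw [mul_comm lam1 lam2, mul_assoc, mul_inv_cancel₀ h1, mul_one]
    rw [hl2]
    exact Subfield.mul_mem _ ((F0_le_adjoin lam1) hmu)
      (Subfield.inv_mem _ (lam_mem_adjoin lam1))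
  · obtain ⟨a3, b3, ha3, hb3, hrel3⟩ := quad_rel hQ3 hm3 hmu
    by_cases hE : lam2 ∈ adjoinReal F0 lam1
    · exact adjoin_eq_of_mem hn1 hn2 ha1 hb1 hrel1 hE
    · exfalso
      have h12 : ∀ s t : ℝ, s ∈ F0 → t ∈ F0 → s + t*lam1 = 0 → s = 0 ∧ t = 0 := by
        intro s t hs ht hst
        by_cases ht0 : t = 0
        · refine ⟨?_, ht0⟩
          rw [ht0] at hst
          linarith
        · exfalso
          apply hn1
          have hl : lam1 = (-s)/t := by
            field_simp
            linear_combination hst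
          rw [hl]
          exact Subfield.div_mem _ (Subfield.neg_mem _ hs) ht
      have INDEP : ∀ α β γ δ : ℝ, α ∈ F0 → β ∈ F0 → γ ∈ F0 → δ ∈ F0 →
          α + β*lam1 + γ*lam2 + δ*(lam1*lam2) = 0 → γ = 0 ∧ δ = 0 := by
        intro α β γ δ hα hβ hγ hδ heq
        have hgd : γ + δ*lam1 = 0 := by
          by_contra hne
          apply hE
          have hl : lam2 = (-(α + β*lam1))/(γ + δ*lam1) := by
            field_simp
            linear_combination (γ + δ*lam1)⁻¹ * heq - lam2 * mul_inv_cancel₀ hne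
          rw [hl]
          exact Subfield.div_mem _
            (Subfield.neg_mem _ (Subfield.add_mem _ ((F0_le_adjoin lam1) hα)
              (Subfield.mul_mem _ ((F0_le_adjoin lam1) hβ) (lam_mem_adjoin lam1))))
            (Subfield.add_mem _ ((F0_le_adjoin lam1) hγ)
              (Subfield.mul_mem _ ((F0_le_adjoin lam1) hδ) (lam_mem_adjoin lam1)))
        exact h12 γ δ hγ hδ hgd
      have heq : (b1*b2 - b3) + (a1*b2)*lam1 + (a2*b1)*lam2
          + (a1*a2 - a3)*(lam1*lam2) = 0 := by
        linear_combination hrel3 - lam1^2 * hrel2 - (a2*lam2+b2) * hrel1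
      obtain ⟨hγ0, _⟩ := INDEP _ _ _ _
        (Subfield.sub_mem _ (Subfield.mul_mem _ hb1 hb2) hb3)
        (Subfield.mul_mem _ ha1 hb2)
        (Subfield.mul_mem _ ha2 hb1)
        (Subfield.sub_mem _ (Subfield.mul_mem _ ha1 ha2) ha3) heq
      have hb1ne : b1 ≠ 0 := by
        intro h0
        apply hn1
        have hl : lam1 = a1 := by
          apply mul_right_cancel₀ h1
          rw [← sq, hrel1, h0]
          ring
        rw [hl]
        exact ha1
      have ha2z : a2 = 0 := (mul_eq_zero.mp hγ0).resolve_right hb1ne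
      apply hns2
      apply sq_unit _ hi2 hi2'
      rw [hrel2, ha2z, zero_mul, zero_add]
      exact hb2
end

section
/- Let Γ be a finitely generated subgroup of the multiplicative group ℝˣ such that every γ ∈ Γ is an S-unit of some subfield K_γ of ℝ containing F₀ with [K_γ : F₀] ≤ 2. Then there exist a single subfield K of ℝ containing F₀ with [K : F₀] ≤ 2 and a finite-index subgroup Γ′ of Γ such that every element of Γ′ is an S-unit of K. -/
open scoped Pointwise

set_option synthInstance.maxHeartbeats 1000000
set_option maxHeartbeats 2000000

/-- The units of `ℝ` lying in a subfield `K`, as a subgroup of `ℝˣ`. -/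
noncomputable def unitsIn (K : Subfield ℝ) : Subgroup ℝˣ where
  carrier := {u : ℝˣ | (u : ℝ) ∈ K}
  one_mem' := K.one_mem
  mul_mem' := fun ha hb => K.mul_mem ha hb
  inv_mem' := fun {u} hu => by
    show ((u⁻¹ : ℝˣ) : ℝ) ∈ K
    rw [Units.val_inv_eq_inv_val]
    exact K.inv_mem hu

lemma mem_unitsIn {K : Subfield ℝ} {u : ℝˣ} : u ∈ unitsIn K ↔ (u : ℝ) ∈ K := Iff.rfl

/-- If `x` belongs to a subfield `K` of `ℝ` which is at most quadratic over `F₀`, then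
`x` is integral of degree at most `2` over `F₀`. -/
lemma isIntegral_and_deg_le {K : Subfield ℝ} (hq : QuadOver F0 K) {x : ℝ} (hx : x ∈ K) :
    IsIntegral ↥F0 x ∧ (minpoly ↥F0 x).natDegree ≤ 2 := by
  obtain ⟨hle, hrank⟩ := hq
  letI : Algebra ↥F0 ↥K := (Subfield.inclusion hle).toAlgebra
  haveI hfd : FiniteDimensional ↥F0 ↥K :=
    Module.rank_lt_aleph0_iff.mp (hrank.trans_lt (by exact_mod_cast Cardinal.nat_lt_aleph0 2))
  let φ : ↥K →ₐ[↥F0] ℝ := { K.subtype with commutes' := fun c => rfl }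
  have hφ : Function.Injective φ := fun a b h => Subtype.ext h
  set y : ↥K := ⟨x, hx⟩
  have hy : IsIntegral ↥F0 y := IsIntegral.of_finite _ _
  have hxy : φ y = x := rfl
  constructor
  · exact hxy ▸ hy.map φ
  · have h1 : minpoly ↥F0 x = minpoly ↥F0 y := by
      rw [← hxy, minpoly.algHom_eq φ hφ]
    rw [h1]
    calc (minpoly ↥F0 y).natDegree ≤ Module.finrank ↥F0 ↥K := minpoly.natDegree_le y
      _ ≤ 2 := by exact_mod_cast Module.finrank_le_of_rank_le (by exact_mod_cast hrank)

/-- The underlying subfield of an intermediate field of `ℝ / F₀` has the same rank over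
`F₀` (with the module structure coming from `Subfield.inclusion`). -/
lemma rank_toSubfield_eq (M : IntermediateField ↥F0 ℝ) (hle : F0 ≤ M.toSubfield) :
    (letI : Algebra ↥F0 ↥M.toSubfield := (Subfield.inclusion hle).toAlgebra
     Module.rank ↥F0 ↥M.toSubfield) = Module.rank ↥F0 ↥M := by
  letI : Algebra ↥F0 ↥M.toSubfield := (Subfield.inclusion hle).toAlgebra
  refine LinearEquiv.rank_eq
    { toFun := fun x => (⟨x.1, x.2⟩ : ↥M)
      map_add' := fun _ _ => rfl
      map_smul' := fun c x => Subtype.ext rfl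
      invFun := fun x => ⟨x.1, x.2⟩
      left_inv := fun _ => rfl
      right_inv := fun _ => rfl }

theorem sunit_group_virtually_in_one_quadratic_extension
    (Γ : Subgroup ℝˣ) (hfg : Γ.FG)
    (hall : ∀ γ ∈ Γ, ∃ K : Subfield ℝ, QuadOver F0 K ∧ IsSUnit K (γ : ℝ)) :
    ∃ K : Subfield ℝ, QuadOver F0 K ∧
      ∃ Γ' : Subgroup ℝˣ, Γ' ≤ Γ ∧ Γ'.relIndex Γ ≠ 0 ∧
        ∀ γ ∈ Γ', IsSUnit K (γ : ℝ) := by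
  classical
  obtain ⟨s, hs⟩ := hfg
  have key : ∀ γ ∈ Γ, IsIntegral ↥F0 ((γ : ℝˣ) : ℝ) ∧ (minpoly ↥F0 ((γ : ℝˣ) : ℝ)).natDegree ≤ 2 := by
    intro γ hγ
    obtain ⟨K, hq, ⟨⟨hmem, _⟩, _⟩⟩ := hall γ hγ
    exact isIntegral_and_deg_le hq hmem
  set E : IntermediateField ↥F0 ℝ :=
    IntermediateField.adjoin ↥F0 ((fun u : ℝˣ => (u : ℝ)) '' ↑s) with hE
  have hsE : ∀ γ ∈ Γ, (γ : ℝ) ∈ E := by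
    intro γ hγ
    rw [← hs] at hγ
    refine Subgroup.closure_induction (fun u hu => ?_) ?_ (fun a b _ _ ha hb => ?_)
      (fun a _ ha => ?_) hγ
    · exact IntermediateField.subset_adjoin _ _ ⟨u, hu, rfl⟩
    · exact E.one_mem
    · exact E.mul_mem ha hb
    · rw [Units.val_inv_eq_inv_val]; exact E.inv_mem ha
  haveI hSfin : Finite ((fun u : ℝˣ => (u : ℝ)) '' ↑s : Set ℝ) :=
    (s.finite_toSet.image _).to_subtype
  haveI : FiniteDimensional ↥F0 ↥E := by
    apply IntermediateField.finiteDimensional_adjoin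
    rintro x ⟨u, hu, rfl⟩
    exact (key u (hs ▸ Subgroup.subset_closure hu)).1
  haveI : Finite (IntermediateField ↥F0 ↥E) :=
    Field.finite_intermediateField_of_exists_primitive_element _ _
      (Field.exists_primitive_element _ _)
  let ι := {M : IntermediateField ↥F0 ↥E // Module.rank ↥F0 ↥M ≤ 2}
  haveI : Finite ι := Subtype.finite
  haveI : Fintype ι := Fintype.ofFinite ι
  let H : ι → Subgroup ↥Γ := fun M =>
    (unitsIn ((M.1.map E.val).toSubfield)).comap Γ.subtype
  have hcover : ⋃ i ∈ (Finset.univ : Finset ι), ((1 : ↥Γ)) • (H i : Set ↥Γ) = Set.univ := by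
    rw [Set.eq_univ_iff_forall]
    intro x
    obtain ⟨hint, hdeg⟩ := key x.1 x.2
    have hxE : ((x.1 : ℝˣ) : ℝ) ∈ E := hsE x.1 x.2
    set a : ↥E := ⟨(x.1 : ℝ), hxE⟩ with ha
    have hia : IsIntegral ↥F0 a := IsIntegral.of_finite _ _
    have hEva : E.val a = ((x.1 : ℝˣ) : ℝ) := rfl
    have hminp : minpoly ↥F0 a = minpoly ↥F0 ((x.1 : ℝˣ) : ℝ) := by
      rw [← hEva, minpoly.algHom_eq E.val (fun p q h => Subtype.ext h)]
    have hfr : Module.finrank ↥F0 ↥(IntermediateField.adjoin ↥F0 {a}) ≤ 2 := by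
      rw [IntermediateField.adjoin.finrank hia, hminp]
      exact hdeg
    have hrk : Module.rank ↥F0 ↥(IntermediateField.adjoin ↥F0 {a}) ≤ 2 := by
      haveI : FiniteDimensional ↥F0 ↥(IntermediateField.adjoin ↥F0 {a}) :=
        IntermediateField.adjoin.finiteDimensional hia
      rw [← Module.finrank_eq_rank]
      exact_mod_cast hfr
    refine Set.mem_iUnion₂.mpr ⟨⟨IntermediateField.adjoin ↥F0 {a}, hrk⟩, Finset.mem_univ _, ?_⟩
    rw [one_smul]
    show ((x.1 : ℝˣ) : ℝ) ∈ ((IntermediateField.adjoin ↥F0 {a}).map E.val).toSubfield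
    exact ⟨a, IntermediateField.mem_adjoin_simple_self _ a, rfl⟩
  obtain ⟨i, _, hfi⟩ := Subgroup.exists_finiteIndex_of_leftCoset_cover hcover
  set M : IntermediateField ↥F0 ℝ := i.1.map E.val with hM
  have hle : F0 ≤ M.toSubfield := by
    intro x hx
    exact M.algebraMap_mem ⟨x, hx⟩
  refine ⟨M.toSubfield, ⟨hle, ?_⟩, Γ ⊓ unitsIn M.toSubfield, inf_le_left, ?_, ?_⟩
  · rw [rank_toSubfield_eq M hle]
    calc Module.rank ↥F0 ↥M = Module.rank ↥F0 ↥i.1 :=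
          ((IntermediateField.equivMap i.1 E.val).symm.toLinearEquiv.rank_eq)
      _ ≤ 2 := i.2
  · rw [Subgroup.relIndex, Subgroup.inf_subgroupOf_left]
    have : (unitsIn M.toSubfield).subgroupOf Γ = H i := rfl
    rw [this]
    exact hfi.index_ne_zero
  · rintro γ ⟨hγΓ, hγK⟩
    obtain ⟨K', hq', ⟨⟨_, hint⟩, ⟨_, hint'⟩⟩⟩ := hall γ hγΓ
    have h1 : (γ : ℝ) ∈ M.toSubfield := hγK
    have h2 : ((γ : ℝ))⁻¹ ∈ M.toSubfield := M.toSubfield.inv_mem h1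
    exact ⟨⟨h1, hint⟩, ⟨h2, hint'⟩⟩
end
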